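/- arXiv:math-ph/9809022 — 6 statements merged into one kernel-verified Lean document; each statement's English description precedes it below -/
import Mathlib

section
/- Let k, l ∈ ℕ with k + l = 2n and l − k ≡ 2 (mod 4), let κ : Cl_{k,l} → ⋀V be the canonical linear isomorphism onto the exterior algebra of V = ℝ^{2n}, and define the Hodge–Kähler duality operator ⋆ on ⋀V by ⋆κ(a) = κ(η a). Then ⋆ maps the middle exterior power ⋀ⁿV into itself, and ⋆(⋆ω) = −ω for every ω ∈ ⋀ⁿV; thus ⋆ defines a complex structure on the real vector space ⋀ⁿV. -/
/-!
Let `e₁, …, e_N` be a `Q`-orthogonal basis. The canonical isomorphism `κ` sends a Clifford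
product `e_{i₁} ⋯ e_{iₘ}` of distinct basis vectors to the wedge product `e_{i₁} ∧ ⋯ ∧ e_{iₘ}`,
because each contraction term in `κ (v a) = v ∧ κ a + g(v) ⌟ κ a` vanishes. The volume element
`η = e₁ ⋯ e_N` multiplies such a product into `±` the product over the complementary indices, so
`⋆` maps `⋀ᵐ` to `⋀^(N-m)`, and `⋀ⁿ` to itself when `N = 2n`. Finally
`η² = (-1)^(C(N,2) + l) = (-1)^(n + l)`, which is `-1` exactly because `l - k ≡ 2 (mod 4)`;
hence `⋆ (⋆ ω) = κ (η² κ⁻¹ ω) = -ω`.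
-/

namespace CliffordAlgebra

variable {R M I : Type*} [CommRing R] [AddCommGroup M] [Module R M]

def monomial (Q : QuadraticForm R M) (e : I → M) (L : List I) : CliffordAlgebra Q :=
  (L.map fun i => ι Q (e i)).prod

variable {Q : QuadraticForm R M} {e : I → M}

@[simp] theorem monomial_nil : monomial Q e [] = 1 := rfl

@[simp] theorem monomial_cons (a : I) (L : List I) :
    monomial Q e (a :: L) = ι Q (e a) * monomial Q e L := List.prod_cons

theorem ι_mul_monomial_of_notMem (he : Pairwise fun i j => Q.IsOrtho (e i) (e j))
    {a : I} {L : List I} (ha : a ∉ L) :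
    ι Q (e a) * monomial Q e L = (-1 : R) ^ L.length • (monomial Q e L * ι Q (e a)) := by
  induction L with
  | nil => simp
  | cons b L ih =>
    rw [List.mem_cons, not_or] at ha
    rw [monomial_cons, ι_mul_ι_mul_of_isOrtho _ (he ha.1), ih ha.2, List.length_cons, pow_succ,
      mul_smul_comm, mul_smul, neg_one_smul, smul_neg, ← mul_assoc]

theorem monomial_mul_self (he : Pairwise fun i j => Q.IsOrtho (e i) (e j)) {L : List I}
    (hL : L.Nodup) :
    monomial Q e L * monomial Q e L
      = ((-1 : R) ^ L.length.choose 2 * (L.map fun i => Q (e i)).prod) • 1 := by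
  induction L with
  | nil => simp
  | cons a L ih =>
    obtain ⟨ha, hL⟩ := List.nodup_cons.mp hL
    have hswap :
        monomial Q e L * ι Q (e a) = (-1 : R) ^ L.length • (ι Q (e a) * monomial Q e L) := by
      rw [ι_mul_monomial_of_notMem he ha, smul_smul, ← pow_add, ← two_mul, pow_mul, neg_one_sq,
        one_pow, one_smul]
    calc ι Q (e a) * monomial Q e L * (ι Q (e a) * monomial Q e L)
        = ι Q (e a) * (monomial Q e L * ι Q (e a)) * monomial Q e L := by simp only [mul_assoc]
      _ = (-1 : R) ^ L.length • (Q (e a) • (monomial Q e L * monomial Q e L)) := by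
        rw [hswap, mul_smul_comm, smul_mul_assoc, ← mul_assoc, ι_sq_scalar, ← Algebra.smul_def,
          smul_mul_assoc]
      _ = _ := by
        rw [ih hL, smul_smul, smul_smul, List.length_cons, Nat.choose_succ_succ',
          Nat.choose_one_right, pow_add, List.map_cons, List.prod_cons]
        ring_nf

theorem ι_mul_monomial (he : Pairwise fun i j => Q.IsOrtho (e i) (e j)) (a : I) {L : List I}
    (hL : L.Nodup) :
    ∃ (r : R) (L' : List I), L'.Nodup ∧ ι Q (e a) * monomial Q e L = r • monomial Q e L' ∧
      ∀ j, j ∈ L' ↔ ¬(j = a ↔ j ∈ L) := by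
  induction L with
  | nil => exact ⟨1, [a], List.nodup_singleton a, by simp, by simp⟩
  | cons b L ih =>
    obtain ⟨hb, hLnd⟩ := List.nodup_cons.mp hL
    by_cases hab : a = b
    · subst hab
      refine ⟨Q (e a), L, hLnd, ?_, fun j => ?_⟩
      · rw [monomial_cons, ← mul_assoc, ι_sq_scalar, ← Algebra.smul_def]
      · by_cases hj : j = a
        · subst hj; simp [hb]
        · simp [hj]
    · obtain ⟨r, L', hL', heq, hmem⟩ := ih hLnd
      refine ⟨-r, b :: L', List.nodup_cons.mpr ⟨?_, hL'⟩, ?_, fun j => ?_⟩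
      · simp [hmem, hb, Ne.symm hab]
      · rw [monomial_cons, ι_mul_ι_mul_of_isOrtho _ (he hab), heq, monomial_cons, mul_smul_comm,
          neg_smul]
      · by_cases hj : j = b
        · subst hj; simp [Ne.symm hab, hb]
        · simp [hj, hmem]

theorem monomial_mul_monomial (he : Pairwise fun i j => Q.IsOrtho (e i) (e j)) {L₁ L₂ : List I}
    (h₁ : L₁.Nodup) (h₂ : L₂.Nodup) :
    ∃ (r : R) (L : List I), L.Nodup ∧ monomial Q e L₁ * monomial Q e L₂ = r • monomial Q e L ∧
      ∀ j, j ∈ L ↔ ¬(j ∈ L₁ ↔ j ∈ L₂) := by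
  induction L₁ with
  | nil => exact ⟨1, L₂, h₂, by simp, by simp⟩
  | cons a L₁ ih =>
    obtain ⟨ha, h₁⟩ := List.nodup_cons.mp h₁
    obtain ⟨r, L, hL, heq, hmem⟩ := ih h₁
    obtain ⟨r', L', hL', heq', hmem'⟩ := ι_mul_monomial he a hL
    refine ⟨r * r', L', hL', ?_, fun j => ?_⟩
    · rw [monomial_cons, mul_assoc, heq, mul_smul_comm, heq', smul_smul]
    · rw [hmem', hmem, List.mem_cons]
      by_cases hj : j = a
      · subst hj; simp [ha]
      · simp [hj]

theorem contractLeft_monomial_of_forall_eq_zero {d : Module.Dual R M} {L : List I}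
    (hd : ∀ j ∈ L, d (e j) = 0) : contractLeft d (monomial Q e L) = 0 := by
  induction L with
  | nil => exact contractLeft_one (Q := Q) d
  | cons a L ih =>
    rw [List.forall_mem_cons] at hd
    rw [monomial_cons, contractLeft_ι_mul, hd.1, ih hd.2, zero_smul, mul_zero, sub_zero]

-- `ExteriorAlgebra R M` is `CliffordAlgebra 0`, so `monomial 0 e L` is a wedge product.
theorem equivExterior_monomial [Invertible (2 : R)]
    (he : Pairwise fun i j => Q.IsOrtho (e i) (e j)) {L : List I} (hL : L.Nodup) :
    equivExterior Q (monomial Q e L) = monomial 0 e L := by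
  induction L with
  | nil => exact changeForm_one changeForm.associated_neg_proof
  | cons a L ih =>
    obtain ⟨ha, hL⟩ := List.nodup_cons.mp hL
    have hortho : ∀ j ∈ L, QuadraticMap.associated (-Q) (e a) (e j) = 0 := fun j hj => by
      rw [map_neg, LinearMap.neg_apply, LinearMap.neg_apply, neg_eq_zero,
        QuadraticMap.associated_isOrtho]
      exact he fun h => ha (h ▸ hj)
    have ih := ih hL
    simp only [equivExterior, changeFormEquiv_apply] at ih ⊢
    rw [monomial_cons, changeForm_ι_mul, ih, contractLeft_monomial_of_forall_eq_zero hortho,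
      sub_zero, monomial_cons]

theorem monomial_zero_ofFn {n : ℕ} (α : Fin n → I) :
    monomial 0 e (List.ofFn α) = ExteriorAlgebra.ιMulti R n (e ∘ α) := by
  rw [ExteriorAlgebra.ιMulti_apply, monomial, List.map_ofFn]
  rfl

theorem monomial_zero_mem_exteriorPower (L : List I) :
    monomial 0 e L ∈ ⋀[R]^L.length M := by
  rw [← List.ofFn_get L, monomial_zero_ofFn, List.length_ofFn]
  exact ExteriorAlgebra.ιMulti_range R _ (Set.mem_range_self _)

theorem equivExterior_monomial_finRange_mul_mem_exteriorPower [Invertible (2 : R)] {N m : ℕ}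
    {e : Fin N → M} (he : Pairwise fun i j => Q.IsOrtho (e i) (e j))
    (hspan : Submodule.span R (Set.range e) = ⊤) {x : ExteriorAlgebra R M}
    (hx : x ∈ ⋀[R]^m M) :
    equivExterior Q (monomial Q e (List.finRange N) * (equivExterior Q).symm x) ∈
      ⋀[R]^(N - m) M := by
  let star : ExteriorAlgebra R M →ₗ[R] ExteriorAlgebra R M :=
    (equivExterior Q).toLinearMap ∘ₗ LinearMap.mulLeft R (monomial Q e (List.finRange N)) ∘ₗ
      (equivExterior Q).symm.toLinearMap
  suffices ⋀[R]^m M ≤ (⋀[R]^(N - m) M).comap star from this hx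
  rw [← exteriorPower.ιMulti_span_fixedDegree_of_span_eq_top R m M hspan, Submodule.span_le]
  rintro _ ⟨a, ha, rfl⟩
  obtain ⟨α, rfl⟩ := Set.range_subset_range_iff_exists_comp.mp ha
  by_cases hα : Function.Injective α
  swap
  · rw [AlternatingMap.map_eq_zero_of_not_injective _ _ fun h => hα h.of_comp]
    exact zero_mem _
  have hα' : (List.ofFn α).Nodup := List.nodup_ofFn.mpr hα
  obtain ⟨r, L, hL, heq, hmem⟩ := monomial_mul_monomial he (List.nodup_finRange N) hα'
  have hlen : L.length = N - m := by
    have hcompl : L.toFinset = (List.ofFn α).toFinsetᶜ := by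
      ext j
      simp [hmem]
    rw [← List.toFinset_card_of_nodup hL, hcompl, Finset.card_compl,
      List.toFinset_card_of_nodup hα', List.length_ofFn, Fintype.card_fin]
  show equivExterior Q (_ * (equivExterior Q).symm _) ∈ ⋀[R]^(N - m) M
  rw [← monomial_zero_ofFn, ← equivExterior_monomial he hα', LinearEquiv.symm_apply_apply, heq,
    map_smul, equivExterior_monomial he hL, ← hlen]
  exact Submodule.smul_mem _ r (monomial_zero_mem_exteriorPower L)

end CliffordAlgebra

namespace QuadraticMap

variable {R ι : Type*} [CommRing R] [Fintype ι] [DecidableEq ι]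

theorem weightedSumSquares_single_one (w : ι → R) (i : ι) :
    weightedSumSquares R w (Pi.single i 1) = w i := by
  simp [Pi.single_apply]

theorem isOrtho_weightedSumSquares_single_one (w : ι → R) {i j : ι} (hij : i ≠ j) :
    (weightedSumSquares R w).IsOrtho (Pi.single i 1) (Pi.single j 1) := by
  rw [isOrtho_def, weightedSumSquares_apply, weightedSumSquares_apply, weightedSumSquares_apply,
    ← Finset.sum_add_distrib]
  refine Finset.sum_congr rfl fun m _ => ?_
  rcases eq_or_ne m i with rfl | hmi
  · simp [hij]
  · rcases eq_or_ne m j with rfl | hmj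
    · simp [hmi]
    · simp [hmi, hmj]

end QuadraticMap

theorem prod_signature_weights {R : Type*} [CommRing R] (k l : ℕ) :
    ∏ i : Fin (k + l), (if (i : ℕ) < k then (1 : R) else -1) = (-1) ^ l := by
  rw [Fin.prod_univ_add]
  simp

theorem odd_choose_two_add_of_sub_emod_four {k l : ℕ} (h : ((l : ℤ) - k) % 4 = 2) :
    Odd ((k + l).choose 2 + l) := by
  obtain ⟨n, hn⟩ : ∃ n, k + l = 2 * n + 2 := ⟨(k + l - 2) / 2, by omega⟩
  have hchoose : (2 * n + 2).choose 2 = 2 * (n * (n + 1)) + (n + 1) := by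
    rw [Nat.choose_two_right, show 2 * n + 2 - 1 = 2 * n + 1 by omega]
    exact Nat.div_eq_of_eq_mul_left two_pos (by ring)
  rw [hn, hchoose, Nat.odd_iff]
  omega

/-- Let `k + l = 2n` with `l − k ≡ 2 (mod 4)`, let
`κ : Cl_{k,l} ≃ ⋀V` be the canonical linear isomorphism onto the exterior algebra of
`V = ℝ^{2n}` and define the Hodge–Kähler duality `⋆ω = κ (η · κ⁻¹ ω)` where `η` is the
volume element.  Then `⋆` maps the middle exterior power `⋀ⁿV` to itself and
`⋆(⋆ω) = −ω` there; hence `⋆` is a complex structure on `⋀ⁿV`. -/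
theorem hodge_star_complex_structure_middle_power
    (k l n : ℕ) (hkl : k + l = 2 * n) (hmod : ((l : ℤ) - k) % 4 = 2)
    (Q : QuadraticForm ℝ (Fin (k + l) → ℝ))
    (hQ : Q = QuadraticMap.weightedSumSquares ℝ
      (fun i : Fin (k + l) => if (i : ℕ) < k then (1 : ℝ) else -1))
    (η : CliffordAlgebra Q)
    (hη : η = (List.ofFn fun i : Fin (k + l) =>
      CliffordAlgebra.ι Q (Pi.single i 1)).prod)
    (κ : CliffordAlgebra Q ≃ₗ[ℝ] ExteriorAlgebra ℝ (Fin (k + l) → ℝ))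
    (hκ : κ = CliffordAlgebra.equivExterior Q)
    (star : ExteriorAlgebra ℝ (Fin (k + l) → ℝ) → ExteriorAlgebra ℝ (Fin (k + l) → ℝ))
    (hstar : ∀ ω, star ω = κ (η * κ.symm ω)) :
    (∀ ω ∈ ⋀[ℝ]^n (Fin (k + l) → ℝ), star ω ∈ ⋀[ℝ]^n (Fin (k + l) → ℝ)) ∧
    (∀ ω ∈ ⋀[ℝ]^n (Fin (k + l) → ℝ), star (star ω) = -ω) := by
  subst hκ
  set e : Fin (k + l) → Fin (k + l) → ℝ := fun i => Pi.single i 1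
  have he : Pairwise fun i j => Q.IsOrtho (e i) (e j) :=
    fun _ _ hij => hQ ▸ QuadraticMap.isOrtho_weightedSumSquares_single_one _ hij
  have hQe (i : Fin (k + l)) : Q (e i) = if (i : ℕ) < k then 1 else -1 :=
    hQ ▸ QuadraticMap.weightedSumSquares_single_one _ i
  have hspan : Submodule.span ℝ (Set.range e) = ⊤ := by
    rw [← (Pi.basisFun ℝ (Fin (k + l))).span_eq]
    congr
    exact funext fun i => (Pi.basisFun_apply ℝ _ i).symm
  have hη_monomial : η = CliffordAlgebra.monomial Q e (List.finRange (k + l)) := by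
    rw [hη, List.ofFn_eq_map]
    rfl
  have hηη : η * η = -1 := by
    rw [hη_monomial, CliffordAlgebra.monomial_mul_self he (List.nodup_finRange _),
      List.length_finRange, ← Fin.prod_univ_def]
    simp only [hQe, prod_signature_weights, ← pow_add,
      (odd_choose_two_add_of_sub_emod_four hmod).neg_one_pow, neg_one_smul]
  refine ⟨fun ω hω => ?_, fun ω _ => ?_⟩
  · have h := CliffordAlgebra.equivExterior_monomial_finRange_mul_mem_exteriorPower he hspan hω
    rwa [show k + l - n = n by omega, ← hη_monomial, ← hstar] at h
  · rw [hstar, hstar, LinearEquiv.symm_apply_apply, ← mul_assoc, hηη, neg_one_mul, map_neg,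
      LinearEquiv.apply_symm_apply]
end

section
/- Let k, l ∈ ℕ with k + l = 2n + 1 and l − k ≡ 1 (mod 4), let κ : Cl_{k,l} → ⋀V be the canonical linear isomorphism onto the exterior algebra of V = ℝ^{2n+1}, and define ⋆ on ⋀V by ⋆κ(a) = κ(η a). Then ⋆ maps the subspace ⋀ⁿV ⊕ ⋀^{n+1}V into itself, and ⋆(⋆ω) = −ω for every ω ∈ ⋀ⁿV ⊕ ⋀^{n+1}V; thus ⋆ defines a complex structure on the real vector space ⋀ⁿV ⊕ ⋀^{n+1}V. -/
/-!
For a pairwise orthogonal spanning family `e` (here the standard basis), the Clifford product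
`e_L` of distinct `eᵢ` is sent by `κ` to the wedge product of the same vectors: the contraction
terms in `κ (v a) = v ∧ κ a + g(v) ⌟ κ a` vanish.  Reordering `η` as `± e_{L'} e_L`, with `L'`
the complementary indices, gives `η e_L = c e_{L'}` because `e_L²` is a scalar; hence `⋆` maps
`⋀ᵖ` to `⋀^{2n+1-p}` and swaps `⋀ⁿ` and `⋀^{n+1}`.  The same reordering shows
`η² = (-1)^(m(m-1)/2) ∏ Q(eᵢ) = (-1)^(n(2n+1) + l)`, which is `-1` exactly when
`l - k ≡ 1 mod 4`, so `⋆ ⋆ ω = κ (η² κ⁻¹ ω) = -ω`.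
-/

open CliffordAlgebra

section Anticommuting

variable {A : Type*} [Ring A]

theorem List.prod_mul_of_forall_anticomm (x : A) (L : List A)
    (h : ∀ y ∈ L, x * y = -(y * x)) :
    L.prod * x = (-1 : ℤ) ^ L.length • (x * L.prod) := by
  induction L with
  | nil => simp
  | cons a T ih =>
    have ha : a * x = -(x * a) := by rw [h a List.mem_cons_self, neg_neg]
    rw [List.prod_cons, mul_assoc, ih fun y hy => h y (List.mem_cons_of_mem _ hy), mul_smul_comm,
      ← mul_assoc, ha, List.length_cons, pow_succ, mul_smul, neg_one_smul, neg_mul, mul_assoc,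
      smul_neg]

theorem List.prod_mul_prod_of_pairwise_anticomm (L : List A)
    (h : L.Pairwise fun a b => a * b = -(b * a)) :
    L.prod * L.prod = (-1 : ℤ) ^ L.length.choose 2 • (L.map fun a => a * a).prod := by
  induction L with
  | nil => simp
  | cons x T ih =>
    rw [List.pairwise_cons] at h
    rw [List.prod_cons, mul_assoc, ← mul_assoc T.prod, T.prod_mul_of_forall_anticomm x h.1,
      smul_mul_assoc, mul_smul_comm, mul_assoc, ← mul_assoc x x, ih h.2, mul_smul_comm, smul_smul,
      List.map_cons, List.prod_cons, List.length_cons, Nat.choose_succ_succ, Nat.choose_one_right,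
      pow_add, mul_comm]

theorem List.Perm.exists_prod_eq_neg_one_pow_smul {L L' : List A} (h : L.Perm L')
    (hL : L.Pairwise fun a b => a * b = -(b * a)) :
    ∃ n : ℕ, L.prod = (-1 : ℤ) ^ n • L'.prod := by
  induction h with
  | nil => exact ⟨0, by simp⟩
  | cons x _ ih =>
    obtain ⟨n, hn⟩ := ih (List.pairwise_cons.1 hL).2
    exact ⟨n, by rw [List.prod_cons, hn, mul_smul_comm, List.prod_cons]⟩
  | swap x y T =>
    refine ⟨1, ?_⟩
    have hyx : y * x = -(x * y) := (List.pairwise_cons.1 hL).1 x List.mem_cons_self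
    simp only [List.prod_cons, ← mul_assoc, hyx, pow_one, neg_smul, one_smul, neg_mul]
  | trans h₁ _ ih₁ ih₂ =>
    obtain ⟨n₁, hn₁⟩ := ih₁ hL
    obtain ⟨n₂, hn₂⟩ := ih₂ (h₁.pairwise hL fun hab => by rw [hab, neg_neg])
    exact ⟨n₁ + n₂, by rw [hn₁, hn₂, smul_smul, pow_add]⟩

end Anticommuting

namespace CliffordAlgebra

variable {R M : Type*} [CommRing R] [AddCommGroup M] [Module R M] {Q : QuadraticForm R M}

theorem pairwise_anticomm_map_ι {L : List M} (hL : L.Pairwise Q.IsOrtho) :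
    (L.map (ι Q)).Pairwise fun a b => a * b = -(b * a) :=
  List.pairwise_map.2 (hL.imp ι_mul_ι_comm_of_isOrtho)

theorem prod_map_ι_mul_self {L : List M} (hL : L.Pairwise Q.IsOrtho) :
    (L.map (ι Q)).prod * (L.map (ι Q)).prod =
      algebraMap R _ ((-1) ^ L.length.choose 2 * (L.map Q).prod) := by
  rw [List.prod_mul_prod_of_pairwise_anticomm _ (pairwise_anticomm_map_ι hL), List.map_map,
    List.length_map,
    show (fun a => a * a) ∘ ι Q = algebraMap R _ ∘ Q from funext (ι_sq_scalar Q),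
    ← List.map_map, ← map_list_prod, map_mul, map_pow, map_neg, map_one, zsmul_eq_mul]
  push_cast
  rfl

theorem contractLeft_prod_map_ι_eq_zero (d : Module.Dual R M) {L : List M}
    (h : ∀ v ∈ L, d v = 0) : contractLeft (Q := Q) d (L.map (ι Q)).prod = 0 := by
  induction L with
  | nil => exact contractLeft_one Q d
  | cons v T ih =>
    rw [List.map_cons, List.prod_cons, contractLeft_ι_mul, ih fun w hw => h w (.tail _ hw),
      h v List.mem_cons_self, mul_zero, zero_smul, sub_zero]

theorem equivExterior_prod_map_ι [Invertible (2 : R)] {L : List M}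
    (hL : L.Pairwise Q.IsOrtho) :
    equivExterior Q (L.map (ι Q)).prod = (L.map (ExteriorAlgebra.ι R)).prod := by
  induction L with
  | nil => exact changeForm_one changeForm.associated_neg_proof
  | cons v T ih =>
    obtain ⟨hv, hT⟩ := List.pairwise_cons.1 hL
    have hcontract : contractLeft (QuadraticMap.associated (-Q) v) (T.map (ι Q)).prod = 0 :=
      contractLeft_prod_map_ι_eq_zero _ fun w hw => by
        simpa using QuadraticMap.associated_isOrtho.2 (hv w hw)
    simp only [equivExterior, changeFormEquiv_apply] at ih ⊢
    rw [List.map_cons, List.prod_cons, changeForm_ι_mul, ← changeForm_contractLeft, hcontract,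
      map_zero, sub_zero, ih hT]
    rfl

theorem _root_.ExteriorAlgebra.prod_map_ι_mem_exteriorPower (L : List M) :
    (L.map (ExteriorAlgebra.ι R)).prod ∈ ⋀[R]^L.length M := by
  induction L with
  | nil => simp
  | cons v T ih =>
    rw [List.map_cons, List.prod_cons, List.length_cons, ExteriorAlgebra.exteriorPower, pow_succ']
    exact Submodule.mul_mem_mul (LinearMap.mem_range_self _ v) ih

theorem pairwise_isOrtho_map_of_nodup {ι : Type*} {v : ι → M}
    (hv : Pairwise fun i j => Q.IsOrtho (v i) (v j)) {L : List ι} (hL : L.Nodup) :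
    (L.map v).Pairwise Q.IsOrtho :=
  List.pairwise_map.2 (hL.imp (hv ·))

section VolumeElement

variable {m : ℕ} {v : Fin m → M}

theorem volume_mul_self (hv : Pairwise fun i j => Q.IsOrtho (v i) (v j)) :
    (List.ofFn fun i => ι Q (v i)).prod * (List.ofFn fun i => ι Q (v i)).prod =
      algebraMap R _ ((-1) ^ m.choose 2 * ∏ i, Q (v i)) := by
  have hortho : (List.ofFn v).Pairwise Q.IsOrtho :=
    List.pairwise_ofFn.2 fun _ _ hij => hv hij.ne
  rw [show (List.ofFn fun i => ι Q (v i)) = (List.ofFn v).map (ι Q) from (List.map_ofFn ..).symm,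
    prod_map_ι_mul_self hortho, List.length_ofFn, List.map_ofFn, List.prod_ofFn]
  rfl

theorem exists_volume_mul_eq_smul (hv : Pairwise fun i j => Q.IsOrtho (v i) (v j))
    {L : List (Fin m)} (hL : L.Nodup) :
    ∃ (c : R) (L' : List (Fin m)), L'.length = m - L.length ∧ L'.Nodup ∧
      (List.ofFn fun i => ι Q (v i)).prod * ((L.map v).map (ι Q)).prod =
        c • ((L'.map v).map (ι Q)).prod := by
  classical
  -- `η = ± e_{L'} e_L` for the complement `L'` of `L`, and `e_L e_L` is a scalar.
  set L' := (List.finRange m).filter (· ∉ L)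
  have hperm : (List.finRange m).Perm (L' ++ L) := by
    refine (List.perm_ext_iff_of_nodup (List.nodup_finRange m)
      (((List.nodup_finRange m).filter _).append hL ?_)).2 fun i => ?_
    · exact List.disjoint_left.2 fun i hi => by simpa [L'] using hi
    · simp [em']
  obtain ⟨n, hn⟩ := ((hperm.map v).map (ι Q)).exists_prod_eq_neg_one_pow_smul
    (pairwise_anticomm_map_ι (pairwise_isOrtho_map_of_nodup hv (List.nodup_finRange m)))
  refine ⟨((-1) ^ n : ℤ) * ((-1) ^ L.length.choose 2 * ((L.map v).map Q).prod), L', ?_,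
    (List.nodup_finRange m).filter _, ?_⟩
  · have := hperm.length_eq
    simp only [List.length_finRange, List.length_append] at this
    omega
  · rw [List.ofFn_eq_map, show (fun i => ι Q (v i)) = ι Q ∘ v from rfl, ← List.map_map, hn,
      List.map_append, List.map_append, List.prod_append, smul_mul_assoc, mul_assoc,
      prod_map_ι_mul_self (pairwise_isOrtho_map_of_nodup hv hL), ← Algebra.commutes,
      ← Algebra.smul_def, List.length_map, mul_smul, mul_smul, Int.cast_smul_eq_zsmul, mul_smul]

theorem equivExterior_volume_mul_mem_exteriorPower [Invertible (2 : R)]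
    (hspan : Submodule.span R (Set.range v) = ⊤) (hv : Pairwise fun i j => Q.IsOrtho (v i) (v j))
    {p : ℕ} {x : ExteriorAlgebra R M} (hx : x ∈ ⋀[R]^p M) :
    equivExterior Q ((List.ofFn fun i => ι Q (v i)).prod * (equivExterior Q).symm x) ∈
      ⋀[R]^(m - p) M := by
  suffices ⋀[R]^p M ≤ (⋀[R]^(m - p) M).comap
      ((equivExterior Q).conj (LinearMap.mulLeft R (List.ofFn fun i => ι Q (v i)).prod)) from
    this hx
  rw [← exteriorPower.ιMulti_family_span_fixedDegree_of_span R hspan, Submodule.span_le,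
    Set.range_subset_iff]
  intro s
  set g := Set.powersetCard.ofFinEmbEquiv.symm s
  have hL : (List.ofFn g).Nodup := List.nodup_ofFn.2 g.injective
  obtain ⟨c, L', hlen, hL', hmul⟩ := exists_volume_mul_eq_smul hv hL
  have hblade : ExteriorAlgebra.ιMulti_family R p v s =
      (((List.ofFn g).map v).map (ExteriorAlgebra.ι R)).prod := by
    rw [ExteriorAlgebra.ιMulti_family, ExteriorAlgebra.ιMulti_apply, List.map_ofFn, List.map_ofFn]
    rfl
  have hmem := Submodule.smul_mem _ c (ExteriorAlgebra.prod_map_ι_mem_exteriorPower (L'.map v))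
  rw [List.length_map, hlen, List.length_ofFn] at hmem
  simp only [SetLike.mem_coe, Submodule.mem_comap, LinearEquiv.conj_apply, LinearMap.comp_apply,
    LinearEquiv.coe_coe, LinearMap.mulLeft_apply]
  rwa [hblade, ← equivExterior_prod_map_ι (pairwise_isOrtho_map_of_nodup hv hL),
    LinearEquiv.symm_apply_apply, hmul, map_smul,
    equivExterior_prod_map_ι (pairwise_isOrtho_map_of_nodup hv hL')]

end VolumeElement

end CliffordAlgebra

namespace QuadraticMap

variable {ι R : Type*} [Fintype ι] [DecidableEq ι] [CommRing R]

theorem weightedSumSquares_single (w : ι → R) (i : ι) (r : R) :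
    weightedSumSquares R w (Pi.single i r) = w i * (r * r) := by
  simp [weightedSumSquares_apply, Pi.single_apply]

theorem isOrtho_weightedSumSquares_single (w : ι → R) {i j : ι} (hij : i ≠ j) (r s : R) :
    (weightedSumSquares R w).IsOrtho (Pi.single i r) (Pi.single j s) := by
  rw [isOrtho_def]
  simp only [weightedSumSquares_apply, ← Finset.sum_add_distrib]
  refine Finset.sum_congr rfl fun t _ => ?_
  have hdisj : (Pi.single i r : ι → R) t * (Pi.single j s : ι → R) t = 0 := by
    by_cases ht : t = i
    · simp [ht, hij]
    · simp [ht]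
  simp only [Pi.add_apply, smul_eq_mul]
  linear_combination (2 * w t) * hdisj

end QuadraticMap

theorem Fin.prod_ite_lt_one_neg_one {R : Type*} [CommMonoid R] [HasDistribNeg R] (k l : ℕ) :
    ∏ i : Fin (k + l), (if (i : ℕ) < k then (1 : R) else -1) = (-1) ^ l := by
  simp [Fin.prod_univ_add]

theorem odd_choose_two_add {k l n : ℕ} (hkl : k + l = 2 * n + 1)
    (hmod : ((l : ℤ) - k) % 4 = 1) :
    Odd ((k + l).choose 2 + l) := by
  have hchoose : (k + l).choose 2 = 2 * (n * n) + n := by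
    rw [hkl, Nat.choose_two_right, Nat.add_sub_cancel,
      show (2 * n + 1) * (2 * n) = (2 * (n * n) + n) * 2 by ring, Nat.mul_div_cancel _ two_pos]
  rw [hchoose, Nat.odd_iff]
  omega

/-- Let `k + l = 2n + 1` with `l − k ≡ 1 (mod 4)`, let
`κ : Cl_{k,l} ≃ ⋀V` be the canonical linear isomorphism onto the exterior algebra of
`V = ℝ^{2n+1}` and define `⋆ω = κ (η · κ⁻¹ ω)` where `η` is the volume element.  Then `⋆`
maps `⋀ⁿV ⊕ ⋀^{n+1}V` to itself and `⋆(⋆ω) = −ω` there; hence `⋆` is a complex structure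
on the real vector space `⋀ⁿV ⊕ ⋀^{n+1}V`. -/
theorem hodge_star_complex_structure_odd_dim
    (k l n : ℕ) (hkl : k + l = 2 * n + 1) (hmod : ((l : ℤ) - k) % 4 = 1)
    (Q : QuadraticForm ℝ (Fin (k + l) → ℝ))
    (hQ : Q = QuadraticMap.weightedSumSquares ℝ
      (fun i : Fin (k + l) => if (i : ℕ) < k then (1 : ℝ) else -1))
    (η : CliffordAlgebra Q)
    (hη : η = (List.ofFn fun i : Fin (k + l) =>
      CliffordAlgebra.ι Q (Pi.single i 1)).prod)
    (κ : CliffordAlgebra Q ≃ₗ[ℝ] ExteriorAlgebra ℝ (Fin (k + l) → ℝ))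
    (hκ : κ = CliffordAlgebra.equivExterior Q)
    (star : ExteriorAlgebra ℝ (Fin (k + l) → ℝ) → ExteriorAlgebra ℝ (Fin (k + l) → ℝ))
    (hstar : ∀ ω, star ω = κ (η * κ.symm ω)) :
    (∀ ω ∈ ⋀[ℝ]^n (Fin (k + l) → ℝ) ⊔ ⋀[ℝ]^(n + 1) (Fin (k + l) → ℝ),
        star ω ∈ ⋀[ℝ]^n (Fin (k + l) → ℝ) ⊔ ⋀[ℝ]^(n + 1) (Fin (k + l) → ℝ)) ∧
    (∀ ω ∈ ⋀[ℝ]^n (Fin (k + l) → ℝ) ⊔ ⋀[ℝ]^(n + 1) (Fin (k + l) → ℝ),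
        star (star ω) = -ω) := by
  have hortho : Pairwise fun i j : Fin (k + l) =>
      Q.IsOrtho (Pi.single i 1) (Pi.single j 1) := fun i j hij =>
    hQ ▸ QuadraticMap.isOrtho_weightedSumSquares_single _ hij 1 1
  have hspan :
      Submodule.span ℝ (Set.range fun i : Fin (k + l) => (Pi.single i 1 : _ → ℝ)) = ⊤ := by
    rw [← funext (Pi.basisFun_apply ℝ (Fin (k + l)))]
    exact (Pi.basisFun ℝ _).span_eq
  have hηη : η * η = -1 := by
    rw [hη, volume_mul_self hortho, hQ]
    simp only [QuadraticMap.weightedSumSquares_single, mul_one, Fin.prod_ite_lt_one_neg_one,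
      ← pow_add, (odd_choose_two_add hkl hmod).neg_one_pow, map_neg, map_one]
  have hstar_mem {p : ℕ} {ω} (hω : ω ∈ ⋀[ℝ]^p (Fin (k + l) → ℝ)) :
      star ω ∈ ⋀[ℝ]^(k + l - p) (Fin (k + l) → ℝ) := by
    rw [hstar, hκ, hη]
    exact equivExterior_volume_mul_mem_exteriorPower hspan hortho hω
  refine ⟨fun ω hω => ?_, fun ω _ => ?_⟩
  · obtain ⟨x, hx, y, hy, rfl⟩ := Submodule.mem_sup.1 hω
    have hx' := hstar_mem hx
    have hy' := hstar_mem hy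
    rw [show k + l - n = n + 1 by omega] at hx'
    rw [show k + l - (n + 1) = n by omega] at hy'
    rw [hstar, map_add, mul_add, map_add, ← hstar, ← hstar]
    exact Submodule.add_mem _ (Submodule.mem_sup_right hx') (Submodule.mem_sup_left hy')
  · rw [hstar, hstar, LinearEquiv.symm_apply_apply, ← mul_assoc, hηη, neg_one_mul, map_neg,
      LinearEquiv.apply_symm_apply]
end

section
/- (Proposition 1, first identity.) Let k + l = 2n and let B : S → S* be an intertwiner for the irreducible representation γ of Cl_{k,l} on the space S of Dirac spinors, i.e. a ℂ-linear isomorphism with ⟨B(γ_μ s), t⟩ = ⟨B s, γ_μ t⟩ for all s, t ∈ S and all μ. Then B is symmetric or antisymmetric according to the sign (−1)^{n(n−1)/2}: for all s, t ∈ S, ⟨B s, t⟩ = (−1)^{n(n−1)/2} ⟨B t, s⟩. -/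
/-!
Let `Γ_A = γ_{a₁} ⋯ γ_{a_r}` for `A = {a₁ < ⋯ < a_r} ⊆ {1, …, 2n}`. By Schur's lemma,
`B⁻¹ ∘ Bᵀ` commutes with the irreducible representation, so `Bᵀ = c B` for a scalar `c`.
The `4ⁿ` operators `Γ_A` are linearly independent (trace pairing), so the bilinear forms
`B ∘ Γ_A` form a basis of `S* ⊗ S*`. Moving `Γ_A` across `B` reverses the order of its
factors, which costs `(-1)^{r(r-1)/2}`, so the transposition `β ↦ βᵀ` acts on `B ∘ Γ_A` by
`c (-1)^{r(r-1)/2}`. Its trace is therefore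
`c ∑_A (-1)^{|A|(|A|-1)/2} = c 2ⁿ (-1)^{n(n-1)/2}`, while the trace of transposition on
`S* ⊗ S*` is `dim S = 2ⁿ`; hence `c = (-1)^{n(n-1)/2}`.
-/

open Module
open scoped Finset

namespace CliffordIntertwiner

variable {K S ι : Type*} [Field K] [AddCommGroup S] [Module K S] {γ : ι → End K S}

theorem mul_listProd [DecidableEq ι] (hanti : Pairwise fun i j => γ i * γ j = -(γ j * γ i))
    (i : ι) (L : List ι) :
    γ i * (L.map γ).prod = (-1 : K) ^ (L.length + L.count i) • ((L.map γ).prod * γ i) := by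
  induction L with
  | nil => simp
  | cons a L ih =>
    set s : K := (-1) ^ (L.length + L.count i)
    have hs : s * s = 1 := by rw [← pow_add, Even.neg_one_pow ⟨_, rfl⟩]
    rw [List.map_cons, List.prod_cons, List.length_cons, List.count_cons]
    by_cases hai : a = i
    · subst hai
      have ih' : (L.map γ).prod * γ a = s • (γ a * (L.map γ).prod) := by
        rw [ih, smul_smul, hs, one_smul]
      have hsign : (-1 : K) ^ (L.length + 1 + (L.count a + 1)) = s := by
        rw [show L.length + 1 + (L.count a + 1) = L.length + L.count a + 2 by ring, pow_add,
          neg_one_sq, mul_one]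
      rw [beq_self_eq_true, if_pos rfl, hsign, mul_assoc, ih', mul_smul_comm, smul_smul, hs,
        one_smul]
    · have hsign : (-1 : K) ^ (L.length + 1 + L.count i) = -s := by
        rw [add_right_comm, pow_succ, mul_neg_one]
      rw [beq_false_of_ne hai, if_neg Bool.false_ne_true, add_zero, hsign, ← mul_assoc,
        hanti (Ne.symm hai), neg_mul, mul_assoc, ih, mul_smul_comm, neg_smul, mul_assoc]

theorem listProd_mul [DecidableEq ι] (hanti : Pairwise fun i j => γ i * γ j = -(γ j * γ i))
    (i : ι) (L : List ι) :
    (L.map γ).prod * γ i = (-1 : K) ^ (L.length + L.count i) • (γ i * (L.map γ).prod) := by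
  rw [mul_listProd hanti, smul_smul, ← pow_add, Even.neg_one_pow ⟨_, rfl⟩, one_smul]

theorem listProd_reverse (hanti : Pairwise fun i j => γ i * γ j = -(γ j * γ i))
    {L : List ι} (hL : L.Nodup) :
    (L.reverse.map γ).prod = (-1 : K) ^ (L.length * (L.length - 1) / 2) • (L.map γ).prod := by
  classical
  induction L with
  | nil => simp
  | cons a L ih =>
    obtain ⟨haL, hL⟩ := List.nodup_cons.mp hL
    rw [List.reverse_cons, List.map_append, List.prod_append, ih hL, List.map_singleton,
      List.prod_singleton, smul_mul_assoc, listProd_mul hanti, List.count_eq_zero_of_not_mem haL,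
      add_zero, smul_smul, ← pow_add, List.length_cons, Nat.triangle_succ, List.map_cons,
      List.prod_cons]

theorem listProd_mul_listProd_reverse {q : ι → K} (hsq : ∀ i, γ i * γ i = q i • 1)
    (L : List ι) : (L.map γ).prod * (L.reverse.map γ).prod = (L.map q).prod • 1 := by
  induction L with
  | nil => simp
  | cons a L ih =>
    rw [List.reverse_cons, List.map_append, List.prod_append, List.map_singleton,
      List.prod_singleton, List.map_cons, List.prod_cons, mul_assoc, ← mul_assoc _ _ (γ a), ih,
      smul_mul_assoc, one_mul, mul_smul_comm, hsq, smul_smul, List.map_cons, List.prod_cons,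
      mul_comm]

theorem trace_eq_zero_of_mul_eq_neg_mul [CharZero K] {g X : End K S} {q : K}
    (hg : g * g = q • 1) (hq : q ≠ 0) (hX : g * X = -(X * g)) : LinearMap.trace K S X = 0 := by
  have h : q * LinearMap.trace K S X = -(q * LinearMap.trace K S X) := calc
    q * LinearMap.trace K S X = LinearMap.trace K S (g * (g * X)) := by
      rw [← mul_assoc, hg, smul_mul_assoc, one_mul, map_smul, smul_eq_mul]
    _ = LinearMap.trace K S ((g * X) * g) := LinearMap.trace_mul_comm K _ _
    _ = -(q * LinearMap.trace K S X) := by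
      rw [hX, neg_mul, mul_assoc, hg, mul_smul_comm, mul_one, map_neg, map_smul, smul_eq_mul]
  exact (mul_eq_zero.mp (CharZero.eq_neg_self_iff.mp h)).resolve_left hq

theorem trace_listProd_eq_zero [CharZero K] [DecidableEq ι] {q : ι → K}
    (hanti : Pairwise fun i j => γ i * γ j = -(γ j * γ i)) (hsq : ∀ i, γ i * γ i = q i • 1)
    (hq : ∀ i, q i ≠ 0) {L : List ι} {j : ι} (hj : Odd (L.length + L.count j)) :
    LinearMap.trace K S (L.map γ).prod = 0 :=
  trace_eq_zero_of_mul_eq_neg_mul (hsq j) (hq j) <| by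
    rw [mul_listProd hanti, hj.neg_one_pow, neg_one_smul]

theorem exists_odd_length_add_count [Fintype ι] [DecidableEq ι] (hι : Even (Fintype.card ι))
    {L : List ι} {i : ι} (hi : Odd (L.count i)) : ∃ j, Odd (L.length + L.count j) := by
  by_contra! h
  simp only [Nat.not_odd_iff_even] at h
  have hL : Odd L.length := Nat.not_even_iff_odd.mp fun hev =>
    Nat.not_even_iff_odd.mpr hi ((Nat.even_add.mp (h i)).mp hev)
  have hodd : ∀ j, Odd (L.count j) := fun j => Nat.not_even_iff_odd.mp fun hev =>
    Nat.not_even_iff_odd.mpr hL ((Nat.even_add.mp (h j)).mpr hev)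
  have hsum : ∑ j, L.count j = L.length := by
    simpa using Multiset.sum_count_eq_card (s := Finset.univ) (m := (L : Multiset ι)) (by simp)
  have : Even (∑ j, L.count j) := by
    rw [Finset.even_sum_iff_even_card_odd]
    simpa [hodd] using hι
  exact Nat.not_even_iff_odd.mpr hL (hsum ▸ this)

def gammaProd [LinearOrder ι] (γ : ι → End K S) (A : Finset ι) : End K S :=
  (A.sort.map γ).prod

theorem count_sort_append_sort_reverse [LinearOrder ι] {A B : Finset ι} {j : ι}
    (hj : j ∈ symmDiff A B) : (A.sort ++ B.sort.reverse).count j = 1 := by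
  rcases Finset.mem_symmDiff.mp hj with ⟨hA, hB⟩ | ⟨hB, hA⟩ <;>
    simp [hA, hB, List.count_eq_zero_of_not_mem]

theorem linearIndependent_gammaProd [Fintype ι] [LinearOrder ι] [FiniteDimensional K S]
    [Nontrivial S] [CharZero K] {q : ι → K}
    (hanti : Pairwise fun i j => γ i * γ j = -(γ j * γ i)) (hsq : ∀ i, γ i * γ i = q i • 1)
    (hq : ∀ i, q i ≠ 0) (hι : Even (Fintype.card ι)) :
    LinearIndependent K (gammaProd γ) := by
  rw [Fintype.linearIndependent_iff]
  intro g hg A₀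
  -- `Γ_A R` is the scalar `∏ q` for `A = A₀`; otherwise some `γ_j` anticommutes with it.
  set R := (A₀.sort.reverse.map γ).prod
  have hpair : ∀ A, LinearMap.trace K S (gammaProd γ A * R) =
      if A = A₀ then (A₀.sort.map q).prod * finrank K S else 0 := by
    intro A
    split_ifs with hA
    · rw [hA, gammaProd, listProd_mul_listProd_reverse hsq, map_smul, LinearMap.trace_one,
        smul_eq_mul]
    · obtain ⟨i, hi⟩ := Finset.symmDiff_nonempty.mpr hA
      obtain ⟨j, hj⟩ := exists_odd_length_add_count hι
        (by rw [count_sort_append_sort_reverse hi]; exact odd_one)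
      rw [gammaProd, ← List.prod_append, ← List.map_append]
      exact trace_listProd_eq_zero hanti hsq hq hj
  have h := congrArg (fun X => LinearMap.trace K S (X * R)) hg
  simp only [Finset.sum_mul, map_sum, smul_mul_assoc, map_smul, hpair, smul_eq_mul, mul_ite,
    mul_zero, Finset.sum_ite_eq', Finset.mem_univ, if_true, zero_mul, map_zero] at h
  refine (mul_eq_zero.mp h).resolve_right (mul_ne_zero ?_ ?_)
  · exact List.prod_ne_zero (by simpa using fun i _ => hq i)
  · exact Nat.cast_ne_zero.mpr Module.finrank_pos.ne'

theorem exists_eq_smul_one_of_commute [IsAlgClosed K] [FiniteDimensional K S] [Nontrivial S]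
    (hirr : ∀ p : Submodule K S, (∀ i, ∀ x ∈ p, γ i x ∈ p) → p = ⊥ ∨ p = ⊤)
    {f : End K S} (hf : ∀ i, Commute f (γ i)) : ∃ c : K, f = c • 1 := by
  obtain ⟨c, hc⟩ := f.exists_eigenvalue
  have hinv : ∀ i, ∀ x ∈ f.eigenspace c, γ i x ∈ f.eigenspace c := fun i x hx => by
    rw [Module.End.mem_eigenspace_iff] at hx ⊢
    rw [← Module.End.mul_apply, (hf i).eq, Module.End.mul_apply, hx, map_smul]
  have htop := (hirr _ hinv).resolve_left (Module.End.hasEigenvalue_iff.mp hc)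
  exact ⟨c, LinearMap.ext fun x =>
    Module.End.mem_eigenspace_iff.mp (htop ▸ Submodule.mem_top)⟩

theorem exists_flip_eq_smul [IsAlgClosed K] [FiniteDimensional K S] [Nontrivial S]
    (hirr : ∀ p : Submodule K S, (∀ i, ∀ x ∈ p, γ i x ∈ p) → p = ⊥ ∨ p = ⊤)
    {B : S →ₗ[K] Dual K S} (hB : Function.Bijective B)
    (hBint : ∀ i s t, B (γ i s) t = B s (γ i t)) : ∃ c : K, B.flip = c • B := by
  set e := LinearEquiv.ofBijective B hB
  set f : End K S := e.symm.toLinearMap ∘ₗ B.flip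
  have hBf : ∀ x, B (f x) = B.flip x := fun x => e.apply_symm_apply (B.flip x)
  have hf : ∀ i, Commute f (γ i) := fun i => LinearMap.ext fun x => hB.1 <| by
    ext t
    simp only [Module.End.mul_apply, hBf, hBint, LinearMap.flip_apply]
  obtain ⟨c, hc⟩ := exists_eq_smul_one_of_commute hirr hf
  refine ⟨c, LinearMap.ext fun x => ?_⟩
  rw [← hBf, hc, LinearMap.smul_apply, Module.End.one_apply, map_smul, LinearMap.smul_apply]

theorem apply_listProd_apply {B : S →ₗ[K] Dual K S}
    (hBint : ∀ i s t, B (γ i s) t = B s (γ i t)) (L : List ι) (s t : S) :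
    B ((L.map γ).prod s) t = B s ((L.reverse.map γ).prod t) := by
  induction L generalizing t with
  | nil => simp
  | cons a L ih =>
    simp only [List.map_cons, List.prod_cons, Module.End.mul_apply, hBint, ih, List.reverse_cons,
      List.map_append, List.prod_append, List.map_nil, List.prod_nil, Module.End.one_apply]

theorem flip_comp_gammaProd [LinearOrder ι]
    (hanti : Pairwise fun i j => γ i * γ j = -(γ j * γ i)) {B : S →ₗ[K] Dual K S}
    (hBint : ∀ i s t, B (γ i s) t = B s (γ i t)) {c : K} (hc : B.flip = c • B)
    (A : Finset ι) :
    (B ∘ₗ gammaProd γ A).flip = (c * (-1) ^ (#A * (#A - 1) / 2)) • (B ∘ₗ gammaProd γ A) := by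
  ext s t
  have hrev := listProd_reverse (γ := γ) hanti (A.sort_nodup (· ≤ ·))
  rw [Finset.length_sort] at hrev
  calc B (gammaProd γ A t) s = c * B s (gammaProd γ A t) := by
        simpa using LinearMap.congr_fun₂ hc s (gammaProd γ A t)
    _ = c * B ((A.sort.reverse.map γ).prod s) t := by
        rw [apply_listProd_apply hBint, List.reverse_reverse, gammaProd]
    _ = _ := by
        rw [hrev, LinearMap.smul_apply, map_smul, LinearMap.smul_apply, smul_eq_mul, ← mul_assoc]
        rfl

theorem trace_eq_sum_of_basis_eigen {R M κ : Type*} [CommSemiring R] [AddCommMonoid M]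
    [Module R M] [Fintype κ] [DecidableEq κ] (b : Basis κ R M) {f : End R M} {μ : κ → R}
    (h : ∀ i, f (b i) = μ i • b i) : LinearMap.trace R M f = ∑ i, μ i := by
  rw [LinearMap.trace_eq_matrix_trace R b, Matrix.trace]
  refine Finset.sum_congr rfl fun i _ => ?_
  rw [Matrix.diag, LinearMap.toMatrix_apply, h, map_smul, b.repr_self, Finsupp.smul_apply,
    Finsupp.single_eq_same, smul_eq_mul, mul_one]

theorem trace_lflip [FiniteDimensional K S] :
    LinearMap.trace K (S →ₗ[K] S →ₗ[K] K)
      (LinearMap.lflip : (S →ₗ[K] S →ₗ[K] K) ≃ₗ[K] (S →ₗ[K] S →ₗ[K] K)).toLinearMap =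
      finrank K S := by
  let e : (S →ₗ[K] S →ₗ[K] K) ≃ₗ[K] Matrix (Fin (finrank K S)) (Fin (finrank K S)) K :=
    LinearMap.toMatrix₂ (finBasis K S) (finBasis K S)
  have he : ∀ M, e (e.symm M).flip = M.transpose := fun M => by
    ext i j
    simp [e, Finsupp.single_apply]
  have hdiag : ∀ i j : Fin (finrank K S),
      (Matrix.stdBasis K _ _).repr (Matrix.stdBasis K _ _ (i, j)).transpose (i, j) =
        if i = j then (1 : K) else 0 := fun i j => by
    rw [Matrix.stdBasis_eq_single, Matrix.transpose_single, ← Matrix.stdBasis_eq_single,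
      Basis.repr_self, Finsupp.single_apply]
    simp [eq_comm]
  rw [LinearMap.trace_eq_matrix_trace K ((Matrix.stdBasis K _ _).map e.symm), Matrix.trace,
    Fintype.sum_prod_type]
  simp [LinearMap.toMatrix_apply, he, hdiag]

theorem linearIndependent_comp_left {M N P κ : Type*} [AddCommGroup M] [Module K M]
    [AddCommGroup N] [Module K N] [AddCommGroup P] [Module K P] {f : N →ₗ[K] P}
    (hf : Function.Injective f) {v : κ → M →ₗ[K] N} (hv : LinearIndependent K v) :
    LinearIndependent K fun i => f ∘ₗ v i := by
  have hcomp : Function.Injective (LinearMap.compRight K f : (M →ₗ[K] N) →ₗ[K] (M →ₗ[K] P)) :=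
    fun X Y h => LinearMap.ext fun x => hf (LinearMap.congr_fun h x)
  simpa only [Function.comp_def, LinearMap.compRight_apply] using hv.map_injOn _ hcomp.injOn

theorem trace_lflip_eq_mul_sum [Fintype ι] [LinearOrder ι] [FiniteDimensional K S]
    [Nontrivial S] [CharZero K] {q : ι → K}
    (hanti : Pairwise fun i j => γ i * γ j = -(γ j * γ i)) (hsq : ∀ i, γ i * γ i = q i • 1)
    (hq : ∀ i, q i ≠ 0) (hι : Even (Fintype.card ι))
    (hdim : finrank K S * finrank K S = 2 ^ Fintype.card ι)
    {B : S →ₗ[K] S →ₗ[K] K} (hB : Function.Injective B)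
    (hBint : ∀ i s t, B (γ i s) t = B s (γ i t)) {c : K} (hc : B.flip = c • B) :
    LinearMap.trace K (S →ₗ[K] S →ₗ[K] K)
      (LinearMap.lflip : (S →ₗ[K] S →ₗ[K] K) ≃ₗ[K] (S →ₗ[K] S →ₗ[K] K)).toLinearMap =
      c * ∑ A : Finset ι, (-1) ^ (#A * (#A - 1) / 2) := by
  classical
  have hind : LinearIndependent K fun A => B ∘ₗ gammaProd γ A :=
    linearIndependent_comp_left hB (linearIndependent_gammaProd hanti hsq hq hι)
  have hcard : Fintype.card (Finset ι) = finrank K (S →ₗ[K] S →ₗ[K] K) := by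
    rw [Fintype.card_finset, Module.finrank_linearMap, Subspace.dual_finrank_eq, hdim]
  rw [trace_eq_sum_of_basis_eigen
    (basisOfLinearIndependentOfCardEqFinrank (V := S →ₗ[K] S →ₗ[K] K) hind hcard)
    (μ := fun A => c * (-1) ^ (#A * (#A - 1) / 2)), Finset.mul_sum]
  intro A
  rw [coe_basisOfLinearIndependentOfCardEqFinrank]
  exact flip_comp_gammaProd hanti hBint hc A

-- `(-1)^{p(p-1)/2}` runs through `1, 1, -1, -1` with period 4, as does the right-hand side.
open Complex in
theorem neg_one_pow_triangle_eq (p : ℕ) :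
    (-1 : ℂ) ^ (p * (p - 1) / 2) = ((1 - I) * I ^ p + (1 + I) * (-I) ^ p) / 2 := by
  induction p with
  | zero => norm_num
  | succ p ih =>
    rw [Nat.triangle_succ, pow_add, ih, pow_succ, pow_succ]
    rcases Nat.even_or_odd p with hp | hp
    · rw [hp.neg_one_pow, hp.neg_pow]
      linear_combination I ^ p * I_mul_I
    · rw [hp.neg_one_pow, hp.neg_pow]
      ring

open Complex in
theorem sum_neg_one_pow_triangle_card {ι : Type*} [Fintype ι] {n : ℕ}
    (hι : Fintype.card ι = 2 * n) :
    ∑ A : Finset ι, (-1 : ℂ) ^ (#A * (#A - 1) / 2) = 2 ^ n * (-1) ^ (n * (n - 1) / 2) := by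
  have hbinom : ∀ x : ℂ, ∑ m ∈ Finset.range (2 * n + 1), ((2 * n).choose m : ℂ) * x ^ m =
      (x + 1) ^ (2 * n) := fun x => by
    rw [add_pow]
    exact Finset.sum_congr rfl fun m _ => by ring
  have hsq : ∀ x : ℂ, x * x = -1 → (x + 1) ^ (2 * n) = 2 ^ n * x ^ n := fun x hx => by
    rw [pow_mul, show (x + 1) ^ 2 = 2 * x by linear_combination hx, mul_pow]
  calc ∑ A : Finset ι, (-1 : ℂ) ^ (#A * (#A - 1) / 2)
      = ∑ m ∈ Finset.range (2 * n + 1), ((2 * n).choose m : ℂ) * (-1) ^ (m * (m - 1) / 2) := by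
        rw [← Finset.powerset_univ,
          Finset.sum_powerset_apply_card fun m => (-1 : ℂ) ^ (m * (m - 1) / 2),
          Finset.card_univ, hι]
        simp only [nsmul_eq_mul]
    _ = (1 - I) / 2 * (I + 1) ^ (2 * n) + (1 + I) / 2 * (-I + 1) ^ (2 * n) := by
        simp only [neg_one_pow_triangle_eq, ← hbinom, Finset.mul_sum, ← Finset.sum_add_distrib]
        exact Finset.sum_congr rfl fun m _ => by ring
    _ = 2 ^ n * (-1) ^ (n * (n - 1) / 2) := by
        rw [hsq I I_mul_I, hsq (-I) (by simp), neg_one_pow_triangle_eq]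
        ring

end CliffordIntertwiner

open CliffordIntertwiner

theorem intertwiner_B_symmetry_general
    (k n : ℕ)
    (S : Type*) [AddCommGroup S] [Module ℂ S] [FiniteDimensional ℂ S]
    (hdim : Module.finrank ℂ S = 2 ^ n)
    (γ : Fin (2 * n) → Module.End ℂ S)
    (hCl : ∀ i j : Fin (2 * n), γ i * γ j + γ j * γ i =
      if i = j then ((if (i : ℕ) < k then (2 : ℂ) else (-2 : ℂ)) • 1) else 0)
    (hirr : ∀ p : Submodule ℂ S, (∀ i : Fin (2 * n), ∀ x ∈ p, γ i x ∈ p) →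
      p = ⊥ ∨ p = ⊤)
    (B : S →ₗ[ℂ] Module.Dual ℂ S) (hBbij : Function.Bijective B)
    (hBint : ∀ (i : Fin (2 * n)) (s t : S), B (γ i s) t = B s (γ i t)) :
    ∀ s t : S, B s t = (-1 : ℂ) ^ (n * (n - 1) / 2) * B t s := by
  set q : Fin (2 * n) → ℂ := fun i => if (i : ℕ) < k then 1 else -1
  have hanti : Pairwise fun i j => γ i * γ j = -(γ j * γ i) := fun i j hij =>
    eq_neg_of_add_eq_zero_left (by simpa [hij] using hCl i j)
  have hsq : ∀ i, γ i * γ i = q i • 1 := fun i => by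
    have h := hCl i i
    rw [if_pos rfl, ← two_smul ℂ] at h
    apply smul_right_injective (End ℂ S) (two_ne_zero : (2 : ℂ) ≠ 0)
    dsimp only
    rw [h, smul_smul]
    split_ifs <;> norm_num [q, *]
  have hq : ∀ i, q i ≠ 0 := fun i => by by_cases h : (i : ℕ) < k <;> simp [q, h]
  have : Nontrivial S := Module.nontrivial_of_finrank_pos (by rw [hdim]; positivity)
  obtain ⟨c, hc⟩ := exists_flip_eq_smul hirr hBbij hBint
  have htrace := trace_lflip_eq_mul_sum hanti hsq hq (by simp)
    (by rw [hdim, Fintype.card_fin, pow_mul']; ring) hBbij.1 hBint hc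
  rw [trace_lflip, hdim, sum_neg_one_pow_triangle_card (Fintype.card_fin _)] at htrace
  set σ : ℂ := (-1) ^ (n * (n - 1) / 2)
  have hσ : σ * σ = 1 := by rw [← pow_add, Even.neg_one_pow ⟨_, rfl⟩]
  have hcσ : c * σ = 1 := by
    refine mul_left_cancel₀ (pow_ne_zero n (two_ne_zero : (2 : ℂ) ≠ 0)) ?_
    push_cast at htrace
    linear_combination -htrace
  have hcσ' : c = σ := by linear_combination σ * hcσ - c * hσ
  intro s t
  simpa [hcσ'] using LinearMap.congr_fun₂ hc t s

/-- Proposition 1, first identity.  Let `k + l = 2n`, let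
`γ᛫ : Fin (2n) → End ℂ S` give the irreducible representation of `Cl_{k,l}` on the
`2ⁿ`-dimensional complex space `S` of Dirac spinors, and let `B : S → S*` be an
intertwiner, i.e. a ℂ-linear isomorphism with `⟨B (γ_μ s), t⟩ = ⟨B s, γ_μ t⟩`.  Then
`⟨B s, t⟩ = (−1)^{n(n−1)/2} ⟨B t, s⟩` for all `s, t ∈ S`. -/
theorem intertwiner_B_symmetry
    (k l n : ℕ) (hkl : k + l = 2 * n)
    (S : Type*) [AddCommGroup S] [Module ℂ S] [FiniteDimensional ℂ S]
    (hdim : Module.finrank ℂ S = 2 ^ n)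
    (γ : Fin (2 * n) → Module.End ℂ S)
    (hCl : ∀ i j : Fin (2 * n), γ i * γ j + γ j * γ i =
      if i = j then ((if (i : ℕ) < k then (2 : ℂ) else (-2 : ℂ)) • 1) else 0)
    (hirr : ∀ p : Submodule ℂ S, (∀ i : Fin (2 * n), ∀ x ∈ p, γ i x ∈ p) →
      p = ⊥ ∨ p = ⊤)
    (B : S →ₗ[ℂ] Module.Dual ℂ S) (hBbij : Function.Bijective B)
    (hBint : ∀ (i : Fin (2 * n)) (s t : S), B (γ i s) t = B s (γ i t)) :
    ∀ s t : S, B s t = (-1 : ℂ) ^ (n * (n - 1) / 2) * B t s :=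
  intertwiner_B_symmetry_general k n S hdim γ hCl hirr B hBbij hBint
end

section
/- (Proposition 2(i), reality.) Let S, γ_μ, γ^μ, γ_{2n+1}, B, σ be as in the normalized Lorentzian Dirac setting, and let ψ : ℝ^{2n} → S be any map. Then for every μ = 1, …, 2n and every x ∈ ℝ^{2n}, the current component j^μ(ψ)(x) = i^{n+1} ⟨B(γ_{2n+1} ψ_c(x)), γ^μ ψ(x)⟩ is a real number. -/
/-!
Write `X = ⟨B(γ₅ ψ_c), γ^μ ψ⟩`. Since `σ² = ±1`, `σ⁻¹ = ±σ`, so `X` is, up to a real sign, the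
Hermitian form `D(γ₅ψ, γ^μψ)`. Hermiticity swaps the two arguments; moving `γ^μ` and then `γ₅`
back across `B` returns to `X` at the cost of the sign `-(-1)^n`: `γ^μ` is `B`-symmetric, it
anticommutes with `γ₅` (a product of an even number of anticommuting generators), and the
`B`-transpose of `γ₅` is the reversed product, which is `(-1)^{n(2n-1)} γ₅ = (-1)^n γ₅`. Hence
`conj X = (-1)^{n+1} X`, which says exactly that `i^{n+1} X` is real.
-/

open LinearMap (IsAdjointPair)
open ComplexConjugate

theorem mul_list_prod_ofFn_eq_smul {R A : Type*} [CommSemiring R] [Semiring A] [Algebra R A]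
    {m : ℕ} (g : A) (f : Fin m → A) (c : Fin m → R) (h : ∀ i, g * f i = c i • (f i * g)) :
    g * (List.ofFn f).prod = (∏ i, c i) • ((List.ofFn f).prod * g) := by
  induction m with
  | zero => simp
  | succ m ih =>
    rw [List.ofFn_succ, List.prod_cons, Fin.prod_univ_succ, ← mul_assoc, h 0, smul_mul_assoc,
      mul_assoc, ih _ _ fun i ↦ h i.succ, mul_smul_comm, smul_smul, mul_assoc]

theorem mul_list_prod_ofFn_eq_neg {A : Type*} [Ring A] {m : ℕ} (hm : Even m) (f : Fin m → A)
    (h : ∀ i j, i ≠ j → f i * f j = -(f j * f i)) (k : Fin m) :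
    f k * (List.ofFn f).prod = -((List.ofFn f).prod * f k) := by
  have hsign : ∏ i, (if i = k then 1 else -1 : ℤ) = -1 := by
    rw [← Finset.mul_prod_erase _ _ (Finset.mem_univ k), if_pos rfl, one_mul,
      Finset.prod_congr rfl fun i hi ↦ if_neg (Finset.ne_of_mem_erase hi), Finset.prod_const,
      Finset.card_erase_of_mem (Finset.mem_univ k), Finset.card_univ, Fintype.card_fin]
    exact Odd.neg_one_pow (Nat.Even.sub_odd k.pos hm odd_one)
  rw [mul_list_prod_ofFn_eq_smul _ _ (fun i ↦ if i = k then 1 else -1 : Fin m → ℤ) fun i ↦ ?_,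
    hsign, neg_one_smul]
  by_cases hik : i = k
  · simp [hik]
  · rw [if_neg hik, neg_one_smul, h k i (Ne.symm hik)]

theorem list_prod_ofFn_reverse {R A : Type*} [CommRing R] [Ring A] [Algebra R A] {m : ℕ}
    (f : Fin m → A) (h : ∀ i j, i ≠ j → f i * f j = -(f j * f i)) :
    (List.ofFn f).reverse.prod = (-1 : R) ^ m.choose 2 • (List.ofFn f).prod := by
  induction m with
  | zero => simp
  | succ m ih =>
    have hlast : f (Fin.last m) * (List.ofFn fun i : Fin m ↦ f i.castSucc).prod =
        (-1 : R) ^ m • ((List.ofFn fun i : Fin m ↦ f i.castSucc).prod * f (Fin.last m)) := by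
      rw [mul_list_prod_ofFn_eq_smul _ _ (fun _ ↦ (-1 : R)) fun i ↦ ?_, Finset.prod_const,
        Finset.card_univ, Fintype.card_fin]
      rw [neg_one_smul]
      exact h _ _ (Fin.castSucc_lt_last i).ne'
    rw [List.ofFn_succ', List.concat_eq_append, List.reverse_append, List.prod_append,
      List.prod_append, List.reverse_singleton, List.prod_singleton,
      ih _ fun i j hij ↦ h _ _ (Fin.castSucc_injective m |>.ne hij), mul_smul_comm, hlast,
      smul_smul, ← pow_add, Nat.choose_succ_succ', Nat.choose_one_right, add_comm m]

theorem neg_one_pow_choose_two_mul {R : Type*} [Monoid R] [HasDistribNeg R] (n : ℕ) :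
    (-1 : R) ^ (2 * n).choose 2 = (-1) ^ n := by
  rw [Nat.choose_two_right, Nat.mul_assoc, Nat.mul_div_cancel_left _ two_pos]
  rcases Nat.even_or_odd n with hn | hn
  · rw [hn.neg_one_pow, (hn.mul_right _).neg_one_pow]
  · obtain ⟨k, rfl⟩ := hn
    rw [Odd.neg_one_pow ⟨k, rfl⟩, Odd.neg_one_pow (Odd.mul ⟨k, rfl⟩ ⟨2 * k, by omega⟩)]

theorem LinearMap.IsAdjointPair.list_prod {R M : Type*} [CommSemiring R] [AddCommMonoid M]
    [Module R M] {B : M →ₗ[R] M →ₗ[R] R} (L : List (Module.End R M))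
    (h : ∀ a ∈ L, B.IsSelfAdjoint a) : IsAdjointPair B B L.prod L.reverse.prod := by
  induction L with
  | nil => exact LinearMap.isAdjointPair_one
  | cons a L ih =>
    rw [List.prod_cons, List.reverse_cons, List.prod_append, List.prod_singleton]
    exact (h a List.mem_cons_self).mul (ih fun b hb ↦ h b (List.mem_cons_of_mem a hb))

theorem Function.Commute.list_prod {R M : Type*} [Semiring R] [AddCommMonoid M] [Module R M]
    {f : M → M} (L : List (Module.End R M)) (h : ∀ a ∈ L, Function.Commute f a) :
    Function.Commute f L.prod := by
  induction L with
  | nil => exact Function.Commute.id_right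
  | cons a L ih =>
    rw [List.prod_cons, Module.End.coe_mul]
    exact (h a List.mem_cons_self).comp_right (ih fun b hb ↦ h b (List.mem_cons_of_mem a hb))

theorem Complex.im_I_pow_mul_eq_zero {z : ℂ} {k : ℕ} (hz : conj z = (-1) ^ k * z) :
    (I ^ k * z).im = 0 := by
  rw [← Complex.conj_eq_iff_im, map_mul, map_pow, Complex.conj_I, hz, ← mul_assoc, ← mul_pow,
    neg_mul_neg, mul_one]

section Dirac

variable {S : Type*} [AddCommGroup S] [Module ℂ S] {σ : S ≃ₛₗ[starRingEnd ℂ] S}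

theorem LinearEquiv.symm_apply_eq_inv_smul_of_apply_apply {ε : ℂ} (hε : ε ≠ 0)
    (hσσ : ∀ s, σ (σ s) = ε • s) (s : S) : σ.symm s = ε⁻¹ • σ s := by
  rw [eq_inv_smul_iff₀ hε, ← hσσ, σ.apply_symm_apply]

theorem conj_apply_symm_eq_neg_mul {B : S →ₗ[ℂ] Module.Dual ℂ S}
    (hherm : ∀ s t, conj (B (σ s) t) = B (σ t) s) {c : ℂ} (hc : conj c = c)
    (hσsymm : ∀ s, σ.symm s = c • σ s) {G Γ : Module.End ℂ S} {ε : ℂ}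
    (hG : IsAdjointPair B B ⇑(ε • G) G) (hΓ : B.IsSelfAdjoint Γ) (hσG : Function.Commute σ G)
    (hσΓ : Function.Commute σ Γ) (hanti : Γ * G = -(G * Γ)) (s : S) :
    conj (B (G (σ.symm s)) (Γ s)) = -ε * B (G (σ.symm s)) (Γ s) := by
  have hσsymmG : G (σ.symm s) = c • σ (G s) := by
    rw [← hσsymm, σ.eq_symm_apply, hσG, σ.apply_symm_apply]
  have hΓG : Γ (G s) = -G (Γ s) := by
    rw [← Module.End.mul_apply, hanti]; rfl
  calc conj (B (G (σ.symm s)) (Γ s))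
      = c * B (σ (Γ s)) (G s) := by rw [hσsymmG, map_smul, LinearMap.smul_apply, smul_eq_mul,
          map_mul, hc, hherm]
    _ = -(c * B (σ s) (G (Γ s))) := by rw [hσΓ, hΓ, hΓG, map_neg, mul_neg]
    _ = -ε * B (G (σ.symm s)) (Γ s) := by
      rw [← hG, hσsymmG, hσG, LinearMap.smul_apply, map_smul, map_smul, LinearMap.smul_apply,
        LinearMap.smul_apply, smul_eq_mul, smul_eq_mul]
      ring

end Dirac

theorem current_is_real_general
    (n : ℕ) (S : Type*) [AddCommGroup S] [Module ℂ S]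
    (γ : Fin (2 * n) → Module.End ℂ S)
    (hCl : ∀ i j : Fin (2 * n), γ i * γ j + γ j * γ i =
      if i = j then ((if (i : ℕ) + 1 < 2 * n then (2 : ℂ) else (-2 : ℂ)) • 1) else 0)
    (γup : Fin (2 * n) → Module.End ℂ S)
    (hγup : ∀ μ : Fin (2 * n), γup μ = if (μ : ℕ) + 1 < 2 * n then γ μ else -γ μ)
    (γ₅ : Module.End ℂ S) (hγ₅ : γ₅ = (List.ofFn γ).prod)
    (B : S →ₗ[ℂ] Module.Dual ℂ S)
    (hBint : ∀ (μ : Fin (2 * n)) (s t : S), B (γ μ s) t = B s (γ μ t))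
    (σ : S ≃ₛₗ[starRingEnd ℂ] S)
    (hσint : ∀ (μ : Fin (2 * n)) (s : S), σ (γ μ s) = γ μ (σ s))
    (hσσ : ∀ s : S, σ (σ s) = ((-1 : ℂ) ^ ((n - 1) * (n - 2) / 2)) • s)
    (hherm : ∀ s t : S, starRingEnd ℂ (B (σ s) t) = B (σ t) s)
    (ψ : (Fin (2 * n) → ℝ) → S)
    (j : Fin (2 * n) → (Fin (2 * n) → ℝ) → ℂ)
    (hj : ∀ (μ : Fin (2 * n)) (x : Fin (2 * n) → ℝ),
      j μ x = Complex.I ^ (n + 1) * B (γ₅ (σ.symm (ψ x))) (γup μ (ψ x))) :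
    ∀ (μ : Fin (2 * n)) (x : Fin (2 * n) → ℝ), (j μ x).im = 0 := by
  intro μ x
  have hanti : ∀ i j, i ≠ j → γ i * γ j = -(γ j * γ i) := fun i j hij ↦
    eq_neg_of_add_eq_zero_left (by simpa [hij] using hCl i j)
  have hσγ₅ : Function.Commute σ γ₅ := hγ₅ ▸ Function.Commute.list_prod _ fun a ha ↦ by
    obtain ⟨i, rfl⟩ := List.mem_ofFn.mp ha
    exact hσint i
  have hBγ₅ : IsAdjointPair B B ⇑((-1 : ℂ) ^ n • γ₅) γ₅ := by
    have h := LinearMap.IsAdjointPair.list_prod (B := B) (List.ofFn γ).reverse fun a ha ↦ by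
      obtain ⟨i, rfl⟩ := List.mem_ofFn.mp (List.mem_reverse.mp ha)
      exact hBint i
    rwa [List.reverse_reverse, list_prod_ofFn_reverse (R := ℂ) γ hanti,
      neg_one_pow_choose_two_mul, ← hγ₅] at h
  have hX := conj_apply_symm_eq_neg_mul hherm (by simp)
    (σ.symm_apply_eq_inv_smul_of_apply_apply (by simp) hσσ) hBγ₅ (hBint μ) hσγ₅ (hσint μ)
    (hγ₅ ▸ mul_list_prod_ofFn_eq_neg ⟨n, two_mul n⟩ γ hanti μ) (ψ x)
  have hreal := Complex.im_I_pow_mul_eq_zero (k := n + 1) (by rw [hX, pow_succ]; ring)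
  rw [hj, hγup]
  split_ifs
  · exact hreal
  · rw [LinearMap.neg_apply, map_neg, mul_neg, Complex.neg_im, hreal, neg_zero]

/-- Proposition 2(i), reality.  In the normalized Lorentzian Dirac
setting of signature `(2n−1,1)`, for any map `ψ : ℝ^{2n} → S` the current components
`j^μ(ψ)(x) = i^{n+1} ⟨B (γ_{2n+1} ψ_c(x)), γ^μ ψ(x)⟩` are real numbers. -/
theorem current_is_real
    (n : ℕ) (S : Type*) [AddCommGroup S] [Module ℂ S] [FiniteDimensional ℂ S]
    (hdim : Module.finrank ℂ S = 2 ^ n)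
    (γ : Fin (2 * n) → Module.End ℂ S)
    (hCl : ∀ i j : Fin (2 * n), γ i * γ j + γ j * γ i =
      if i = j then ((if (i : ℕ) + 1 < 2 * n then (2 : ℂ) else (-2 : ℂ)) • 1) else 0)
    (γup : Fin (2 * n) → Module.End ℂ S)
    (hγup : ∀ μ : Fin (2 * n), γup μ = if (μ : ℕ) + 1 < 2 * n then γ μ else -γ μ)
    (γ₅ : Module.End ℂ S) (hγ₅ : γ₅ = (List.ofFn γ).prod)
    (B : S →ₗ[ℂ] Module.Dual ℂ S) (hBbij : Function.Bijective B)
    (hBint : ∀ (μ : Fin (2 * n)) (s t : S), B (γ μ s) t = B s (γ μ t))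
    (hBsymm : ∀ s t : S, B s t = (-1 : ℂ) ^ (n * (n - 1) / 2) * B t s)
    (σ : S ≃ₛₗ[starRingEnd ℂ] S)
    (hσint : ∀ (μ : Fin (2 * n)) (s : S), σ (γ μ s) = γ μ (σ s))
    (hσσ : ∀ s : S, σ (σ s) = ((-1 : ℂ) ^ ((n - 1) * (n - 2) / 2)) • s)
    (hherm : ∀ s t : S, starRingEnd ℂ (B (σ s) t) = B (σ t) s)
    (ψ : (Fin (2 * n) → ℝ) → S)
    (j : Fin (2 * n) → (Fin (2 * n) → ℝ) → ℂ)
    (hj : ∀ (μ : Fin (2 * n)) (x : Fin (2 * n) → ℝ),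
      j μ x = Complex.I ^ (n + 1) * B (γ₅ (σ.symm (ψ x))) (γup μ (ψ x))) :
    ∀ (μ : Fin (2 * n)) (x : Fin (2 * n) → ℝ), (j μ x).im = 0 :=
  current_is_real_general n S γ hCl γup hγup γ₅ hγ₅ B hBint σ hσint hσσ hherm ψ j hj
end

section
/- (Proposition 2(i), invariance under charge conjugation.) Let S, γ_μ, γ^μ, γ_{2n+1}, B, σ be as in the normalized Lorentzian Dirac setting, and let ψ : ℝ^{2n} → S be any map. Then the current is invariant under the replacement of ψ by its charge conjugate: j^μ(ψ_c)(x) = j^μ(ψ)(x) for every μ = 1, …, 2n and every x ∈ ℝ^{2n}. -/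
/-!
Because `σ⁻¹ ∘ σ⁻¹ = ε` with `ε = (-1)^((n-1)(n-2)/2)`, the current of `ψ_c` is
`i^{n+1} ε ⟨B (γ_{2n+1} ψ), γ^μ σ⁻¹ψ⟩`. The `B`-adjoint of `γ_{2n+1} = γ₁ ⋯ γ_{2n}` is the reversed
product `(-1)^C(2n,2) γ_{2n+1}`, `γ_{2n+1}` anticommutes with `γ^μ`, and `B` is symmetric up to
`(-1)^(n(n-1)/2)`. Moving `γ_{2n+1}` and `γ^μ` across `B` thus exchanges `ψ` and `σ⁻¹ψ`, and the
resulting sign cancels `ε`.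
-/

open LinearMap (IsAdjointPair)

section AntiCommuting

variable {K A ι : Type*} [CommRing K] [Ring A] [Algebra K A] {γ : ι → A}

theorem prod_map_mul_eq_smul_of_anticomm [DecidableEq ι]
    (hγ : Pairwise fun i j => γ i * γ j = -(γ j * γ i)) (a : ι) (l : List ι) :
    (l.map γ).prod * γ a = (-1 : K) ^ l.countP (· ≠ a) • (γ a * (l.map γ).prod) := by
  induction l with
  | nil => simp
  | cons b l ih =>
    have hcons : ((b :: l).map γ).prod * γ a
        = (-1 : K) ^ l.countP (· ≠ a) • (γ b * γ a * (l.map γ).prod) := by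
      rw [List.map_cons, List.prod_cons, mul_assoc, ih, mul_smul_comm, mul_assoc]
    by_cases hb : b = a
    · subst hb
      rw [hcons, List.countP_cons_of_neg (by simp), List.map_cons, List.prod_cons, mul_assoc]
    · rw [hcons, hγ hb, List.countP_cons_of_pos (by simpa using hb), pow_succ]
      simp [mul_assoc]

theorem prod_map_reverse_eq_smul_of_anticomm
    (hγ : Pairwise fun i j => γ i * γ j = -(γ j * γ i)) {l : List ι} (hl : l.Nodup) :
    (l.map γ).reverse.prod = (-1 : K) ^ l.length.choose 2 • (l.map γ).prod := by
  classical
  induction l with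
  | nil => simp
  | cons a l ih =>
    obtain ⟨ha, hl⟩ := List.nodup_cons.mp hl
    have hcount : l.countP (· ≠ a) = l.length :=
      List.countP_eq_length.mpr fun b hb => by simpa using ne_of_mem_of_not_mem hb ha
    rw [List.map_cons, List.reverse_cons, List.prod_append, List.prod_singleton, ih hl,
      smul_mul_assoc, prod_map_mul_eq_smul_of_anticomm (K := K) hγ, hcount, smul_smul,
      ← pow_add, List.length_cons, Nat.choose_succ_succ', Nat.choose_one_right, add_comm,
      List.prod_cons]

theorem prod_ofFn_mul_of_anticomm {m : ℕ} {γ : Fin m → A}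
    (hγ : Pairwise fun i j => γ i * γ j = -(γ j * γ i)) (hm : Even m) (a : Fin m) :
    (List.ofFn γ).prod * γ a = -(γ a * (List.ofFn γ).prod) := by
  have hcount : (List.finRange m).countP (· ≠ a) = m - 1 := by
    have h := List.length_eq_countP_add_countP (· == a) (l := List.finRange m)
    rw [← List.count, List.count_finRange, List.length_finRange] at h
    simp only [beq_iff_eq] at h
    simp only [ne_eq]
    omega
  have hodd : Odd (m - 1) := Nat.Even.sub_odd (by have := a.pos; omega) hm odd_one
  rw [List.ofFn_eq_map, prod_map_mul_eq_smul_of_anticomm (K := ℤ) hγ, hcount, hodd.neg_one_pow,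
    neg_one_smul]

end AntiCommuting

section AdjointPair

variable {R M ι : Type*} [CommRing R] [AddCommGroup M] [Module R M] {B : LinearMap.BilinForm R M}

theorem isAdjointPair_prod_map_reverse {f : ι → Module.End R M}
    (hf : ∀ i, IsAdjointPair B B (f i) (f i)) (l : List ι) :
    IsAdjointPair B B (l.map f).prod (l.map f).reverse.prod := by
  induction l with
  | nil => exact LinearMap.isAdjointPair_one
  | cons a l ih => simpa using (hf a).mul ih

theorem isAdjointPair_prod_ofFn {m : ℕ} {γ : Fin m → Module.End R M}
    (hadj : ∀ i, IsAdjointPair B B (γ i) (γ i))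
    (hγ : Pairwise fun i j => γ i * γ j = -(γ j * γ i)) :
    IsAdjointPair B B (List.ofFn γ).prod ((-1 : R) ^ m.choose 2 • (List.ofFn γ).prod) := by
  have h := isAdjointPair_prod_map_reverse hadj (List.finRange m)
  rwa [prod_map_reverse_eq_smul_of_anticomm (K := R) hγ (List.nodup_finRange m),
    List.length_finRange, ← List.ofFn_eq_map] at h

theorem apply_apply_eq_of_isAdjointPair_of_anticomm {β c : R}
    (hB : ∀ s t, B s t = β * B t s) {g f : Module.End R M}
    (hg : IsAdjointPair B B g (c • g)) (hf : IsAdjointPair B B f f) (hgf : g * f = -(f * g))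
    (s t : M) : B (g s) (f t) = -(c * β) * B (g t) (f s) :=
  calc B (g s) (f t)
      = c * B s ((g * f) t) := by rw [hg, Pi.smul_apply, map_smul, smul_eq_mul]; rfl
    _ = -c * B (f s) (g t) := by
        rw [hgf, LinearMap.neg_apply, map_neg, Module.End.mul_apply, ← hf]; ring
    _ = -(c * β) * B (g t) (f s) := by rw [hB]; ring

end AdjointPair

theorem Equiv.symm_symm_apply_eq_smul {R M : Type*} [Monoid R] [MulAction R M] (e : M ≃ M)
    {c : R} (hc : c * c = 1) (he : ∀ x, e (e x) = c • x) (x : M) :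
    e.symm (e.symm x) = c • x :=
  calc e.symm (e.symm x) = (c * c) • e.symm (e.symm x) := by rw [hc, one_smul]
    _ = c • e (e (e.symm (e.symm x))) := by rw [mul_smul, he]
    _ = c • x := by simp

/-- The three exponents are those of `σ ∘ σ`, of the symmetry of `B`, and of the `B`-adjoint of
`γ_{2n+1}`. -/
theorem neg_one_pow_charge_conjugation_sign {R : Type*} [Monoid R] [HasDistribNeg R] {n : ℕ}
    (hn : 0 < n) :
    (-1 : R) ^ ((n - 1) * (n - 2) / 2) * (-1) ^ (n * (n - 1) / 2) * (-1) ^ (2 * n).choose 2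
      = -1 := by
  obtain ⟨m, rfl⟩ : ∃ m, n = m + 1 := ⟨n - 1, by omega⟩
  have e1 : (m + 1 - 1) * (m + 1 - 2) / 2 = m * (m - 1) / 2 := rfl
  have e2 : (m + 1) * (m + 1 - 1) / 2 = m * (m - 1) / 2 + m := Nat.triangle_succ m
  have e3 : (2 * (m + 1)).choose 2 = (m + 1) * (2 * m + 1) := by
    rw [Nat.choose_two_right, mul_assoc, Nat.mul_div_cancel_left _ two_pos,
      show 2 * (m + 1) - 1 = 2 * m + 1 by omega]
  rw [e1, e2, e3, ← pow_add, ← pow_add, Odd.neg_one_pow]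
  exact ⟨m * (m - 1) / 2 + m * m + 2 * m, by ring⟩

theorem current_invariant_under_charge_conjugation_general
    (n : ℕ) (S : Type*) [AddCommGroup S] [Module ℂ S]
    (γ : Fin (2 * n) → Module.End ℂ S)
    (hCl : ∀ i j : Fin (2 * n), γ i * γ j + γ j * γ i =
      if i = j then ((if (i : ℕ) + 1 < 2 * n then (2 : ℂ) else (-2 : ℂ)) • 1) else 0)
    (γup : Fin (2 * n) → Module.End ℂ S)
    (hγup : ∀ μ : Fin (2 * n), γup μ = if (μ : ℕ) + 1 < 2 * n then γ μ else -γ μ)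
    (γ₅ : Module.End ℂ S) (hγ₅ : γ₅ = (List.ofFn γ).prod)
    (B : S →ₗ[ℂ] Module.Dual ℂ S)
    (hBint : ∀ (μ : Fin (2 * n)) (s t : S), B (γ μ s) t = B s (γ μ t))
    (hBsymm : ∀ s t : S, B s t = (-1 : ℂ) ^ (n * (n - 1) / 2) * B t s)
    (σ : S ≃ₛₗ[starRingEnd ℂ] S)
    (hσσ : ∀ s : S, σ (σ s) = ((-1 : ℂ) ^ ((n - 1) * (n - 2) / 2)) • s)
    (jfun : ((Fin (2 * n) → ℝ) → S) → Fin (2 * n) → (Fin (2 * n) → ℝ) → ℂ)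
    (hjfun : ∀ (φ : (Fin (2 * n) → ℝ) → S) (μ : Fin (2 * n)) (x : Fin (2 * n) → ℝ),
      jfun φ μ x = Complex.I ^ (n + 1) * B (γ₅ (σ.symm (φ x))) (γup μ (φ x))) :
    ∀ (ψ : (Fin (2 * n) → ℝ) → S) (μ : Fin (2 * n)) (x : Fin (2 * n) → ℝ),
      jfun (fun y => σ.symm (ψ y)) μ x = jfun ψ μ x := by
  intro ψ μ x
  have hn : 0 < n := by have := μ.isLt; omega
  have hanti : Pairwise fun i j => γ i * γ j = -(γ j * γ i) := fun i j hij =>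
    eq_neg_of_add_eq_zero_left (by simpa [hij] using hCl i j)
  have hγ₅_adj : IsAdjointPair B B γ₅ ((-1 : ℂ) ^ (2 * n).choose 2 • γ₅) :=
    hγ₅ ▸ isAdjointPair_prod_ofFn hBint hanti
  have hγup_adj : IsAdjointPair B B (γup μ) (γup μ) := by
    rw [hγup]
    split_ifs
    · exact hBint μ
    · intro s t
      simp [hBint]
  have hγup_anti : γ₅ * γup μ = -(γup μ * γ₅) := by
    rw [hγup, hγ₅]
    split_ifs <;> simp [prod_ofFn_mul_of_anticomm hanti (even_two_mul n)]
  have hσ_symm_symm : σ.symm (σ.symm (ψ x)) = (-1 : ℂ) ^ ((n - 1) * (n - 2) / 2) • ψ x :=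
    σ.toEquiv.symm_symm_apply_eq_smul
      (by rw [← pow_add]; exact Even.neg_one_pow ⟨_, rfl⟩) hσσ _
  rw [hjfun, hjfun, hσ_symm_symm, map_smul, map_smul, LinearMap.smul_apply, smul_eq_mul,
    apply_apply_eq_of_isAdjointPair_of_anticomm hBsymm hγ₅_adj hγup_adj hγup_anti]
  congr 1
  rw [← mul_assoc]
  convert one_mul _ using 2
  linear_combination -neg_one_pow_charge_conjugation_sign (R := ℂ) hn

/-- Proposition 2(i), invariance under charge conjugation.  In the
normalized Lorentzian Dirac setting of signature `(2n−1,1)`, for any map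
`ψ : ℝ^{2n} → S` the current `j^μ(ψ)(x) = i^{n+1} ⟨B (γ_{2n+1} ψ_c(x)), γ^μ ψ(x)⟩`
satisfies `j^μ(ψ_c) = j^μ(ψ)`. -/
theorem current_invariant_under_charge_conjugation
    (n : ℕ) (S : Type*) [AddCommGroup S] [Module ℂ S] [FiniteDimensional ℂ S]
    (hdim : Module.finrank ℂ S = 2 ^ n)
    (γ : Fin (2 * n) → Module.End ℂ S)
    (hCl : ∀ i j : Fin (2 * n), γ i * γ j + γ j * γ i =
      if i = j then ((if (i : ℕ) + 1 < 2 * n then (2 : ℂ) else (-2 : ℂ)) • 1) else 0)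
    (γup : Fin (2 * n) → Module.End ℂ S)
    (hγup : ∀ μ : Fin (2 * n), γup μ = if (μ : ℕ) + 1 < 2 * n then γ μ else -γ μ)
    (γ₅ : Module.End ℂ S) (hγ₅ : γ₅ = (List.ofFn γ).prod)
    (B : S →ₗ[ℂ] Module.Dual ℂ S) (hBbij : Function.Bijective B)
    (hBint : ∀ (μ : Fin (2 * n)) (s t : S), B (γ μ s) t = B s (γ μ t))
    (hBsymm : ∀ s t : S, B s t = (-1 : ℂ) ^ (n * (n - 1) / 2) * B t s)
    (σ : S ≃ₛₗ[starRingEnd ℂ] S)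
    (hσint : ∀ (μ : Fin (2 * n)) (s : S), σ (γ μ s) = γ μ (σ s))
    (hσσ : ∀ s : S, σ (σ s) = ((-1 : ℂ) ^ ((n - 1) * (n - 2) / 2)) • s)
    (hherm : ∀ s t : S, starRingEnd ℂ (B (σ s) t) = B (σ t) s)
    (jfun : ((Fin (2 * n) → ℝ) → S) → Fin (2 * n) → (Fin (2 * n) → ℝ) → ℂ)
    (hjfun : ∀ (φ : (Fin (2 * n) → ℝ) → S) (μ : Fin (2 * n)) (x : Fin (2 * n) → ℝ),
      jfun φ μ x = Complex.I ^ (n + 1) * B (γ₅ (σ.symm (φ x))) (γup μ (φ x))) :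
    ∀ (ψ : (Fin (2 * n) → ℝ) → S) (μ : Fin (2 * n)) (x : Fin (2 * n) → ℝ),
      jfun (fun y => σ.symm (ψ y)) μ x = jfun ψ μ x :=
  current_invariant_under_charge_conjugation_general n S γ hCl γup hγup γ₅ hγ₅ B hBint hBsymm σ hσσ
    jfun hjfun
end

section
/- (Proposition 2(ii), current conservation.) Let S, γ_μ, γ^μ, γ_{2n+1}, B, σ be as in the normalized Lorentzian Dirac setting, let m, e ∈ ℝ, let A₁, …, A_{2n} : ℝ^{2n} → ℝ and let ψ : ℝ^{2n} → S be differentiable. If ψ satisfies the Dirac equation Σ_μ γ^μ(∂_μ ψ(x) − i e A_μ(x) ψ(x)) = m ψ(x) for all x, then the current is conserved: Σ_μ ∂_μ (j^μ(ψ))(x) = 0 for all x ∈ ℝ^{2n}. -/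
/-!
Put `Φ(u, v) = ⟨B(γ₅ σ⁻¹ u), v⟩`, a sesquilinear form. Every `γ^μ` is `Φ`-skew: `σ` commutes
with `γ_μ`, `B` makes `γ_μ` symmetric, and `γ₅` anticommutes with `γ_μ` because the number `2n`
of generators is even. By the Leibniz rule and skewness,
`Σ_μ ∂_μ j^μ = i^{n+1} (Φ(ψ, Dψ) − Φ(Dψ, ψ))` with `Dψ = Σ_μ γ^μ ∂_μ ψ`. The Dirac equation
gives `Dψ = m ψ + Σ_μ i e A_μ γ^μ ψ`, and this operator is `Φ`-symmetric since `m` is real and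
each `i e A_μ` is imaginary, so the divergence vanishes.
-/

open Finset ComplexConjugate

theorem mul_prod_map_of_anticommute {R ι : Type*} [Ring R] [DecidableEq ι] (f : ι → R) (i : ι)
    (h : ∀ j, j ≠ i → f i * f j = -(f j * f i)) (L : List ι) :
    f i * (L.map f).prod = (-1) ^ L.countP (· != i) * ((L.map f).prod * f i) := by
  induction L with
  | nil => simp
  | cons a L ih =>
    simp only [List.map_cons, List.prod_cons, List.countP_cons, ← mul_assoc]
    by_cases ha : a = i
    · subst ha
      simp [mul_assoc, ih, ((Commute.neg_one_left (f a)).pow_left _).eq]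
    · simp [ha, h a ha, mul_assoc, ih, pow_succ, ((Commute.neg_one_left (f a)).pow_left _).eq]

theorem List.countP_bne_finRange {k : ℕ} (i : Fin k) :
    (List.finRange k).countP (· != i) = k - 1 := by
  rw [List.countP_eq_length_filter, ← (List.nodup_finRange k).erase_eq_filter i,
    List.length_erase_of_mem (List.mem_finRange i), List.length_finRange]

theorem prod_ofFn_mul_of_anticommute {R : Type*} [Ring R] {k : ℕ} (hk : Even k) (f : Fin k → R)
    (i : Fin k) (h : ∀ j, j ≠ i → f i * f j = -(f j * f i)) :
    (List.ofFn f).prod * f i = -(f i * (List.ofFn f).prod) := by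
  have hodd : Odd (k - 1) := Nat.Even.sub_odd (Fin.pos i) hk odd_one
  rw [List.ofFn_eq_map, mul_prod_map_of_anticommute f i h, List.countP_bne_finRange,
    hodd.neg_one_pow, neg_one_mul, neg_neg]

theorem skew_of_symmetric_of_anticommute {S : Type*} [AddCommGroup S] [Module ℂ S]
    (B : S →ₗ[ℂ] Module.Dual ℂ S) (γ₅ Γ : Module.End ℂ S) (σ : S ≃ₛₗ[starRingEnd ℂ] S)
    (hB : ∀ s t, B (Γ s) t = B s (Γ t)) (hσ : ∀ s, σ (Γ s) = Γ (σ s))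
    (h₅ : γ₅ * Γ = -(Γ * γ₅)) (u v : S) :
    (B ∘ₛₗ γ₅ ∘ₛₗ σ.symm.toLinearMap) (Γ u) v = -(B ∘ₛₗ γ₅ ∘ₛₗ σ.symm.toLinearMap) u (Γ v) := by
  have hσ' : σ.symm (Γ u) = Γ (σ.symm u) := σ.symm_apply_eq.mpr (by rw [hσ, σ.apply_symm_apply])
  have h₅' : γ₅ (Γ (σ.symm u)) = -Γ (γ₅ (σ.symm u)) := congr($h₅ (σ.symm u))
  simp [hσ', h₅', hB]

section Sesquilinear

variable {E F G : Type*} [NormedAddCommGroup E] [NormedSpace ℂ E] [NormedAddCommGroup F]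
  [NormedSpace ℂ F] [NormedAddCommGroup G] [NormedSpace ℂ G]

theorem LinearMap.isBilinearMap_real (Φ : E →ₗ⋆[ℂ] F →ₗ[ℂ] G) :
    IsBilinearMap ℝ fun u v => Φ u v where
  add_left u u' v := by simp
  smul_left r u v := by simp [← Complex.coe_smul]
  add_right u v v' := by simp
  smul_right r u v := by simp [← Complex.coe_smul]

theorem LinearMap.fderiv_sesq_apply [FiniteDimensional ℂ E] [FiniteDimensional ℂ F]
    {H : Type*} [NormedAddCommGroup H] [NormedSpace ℝ H] (Φ : E →ₗ⋆[ℂ] F →ₗ[ℂ] G)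
    {f : H → E} {g : H → F} {x : H} (hf : DifferentiableAt ℝ f x) (hg : DifferentiableAt ℝ g x)
    (v : H) :
    fderiv ℝ (fun y => Φ (f y) (g y)) x v =
      Φ (fderiv ℝ f x v) (g x) + Φ (f x) (fderiv ℝ g x v) := by
  have h := Φ.isBilinearMap_real.toContinuousBilinearMap.fderiv_of_bilinear hf hg
  simp only [IsBilinearMap.toContinuousBilinearMap_apply] at h
  rw [h]
  simp [add_comm]

end Sesquilinear

section SkewGenerators

variable {M ι : Type*} [AddCommGroup M] [Module ℂ M] [Fintype ι] (Φ : M →ₗ⋆[ℂ] M →ₗ[ℂ] ℂ)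
  (Γ : ι → Module.End ℂ M)

theorem LinearMap.symm_smul_add_sum_smul_of_skew (hΓ : ∀ μ u v, Φ (Γ μ u) v = -Φ u (Γ μ v))
    {m : ℂ} (hm : conj m = m) {z : ι → ℂ}
    (hz : ∀ μ, conj (z μ) = -z μ) (u v : M) :
    Φ (m • u + ∑ μ, z μ • Γ μ u) v = Φ u (m • v + ∑ μ, z μ • Γ μ v) := by
  simp [hm, hz, hΓ]

theorem LinearMap.sum_divergence_eq_zero_of_skew (hΓ : ∀ μ u v, Φ (Γ μ u) v = -Φ u (Γ μ v))
    {m : ℂ} (hm : conj m = m) {z : ι → ℂ}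
    (hz : ∀ μ, conj (z μ) = -z μ) (d : ι → M) (w : M)
    (hD : ∑ μ, Γ μ (d μ) = m • w + ∑ μ, z μ • Γ μ w) :
    ∑ μ, (Φ (d μ) (Γ μ w) + Φ w (Γ μ (d μ))) = 0 := by
  have hsymm := Φ.symm_smul_add_sum_smul_of_skew Γ hΓ hm hz w w
  rw [← hD] at hsymm
  simp only [map_sum, LinearMap.sum_apply] at hsymm
  have hflip : ∀ μ, Φ (d μ) (Γ μ w) = -Φ (Γ μ (d μ)) w := fun μ => by rw [hΓ, neg_neg]
  simp only [hflip, sum_add_distrib, sum_neg_distrib, hsymm, neg_add_cancel]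

end SkewGenerators

theorem current_conservation_general
    (n : ℕ) (S : Type*) [NormedAddCommGroup S] [NormedSpace ℂ S]
    [FiniteDimensional ℂ S]
    (γ : Fin (2 * n) → Module.End ℂ S)
    (hCl : ∀ i j : Fin (2 * n), γ i * γ j + γ j * γ i =
      if i = j then ((if (i : ℕ) + 1 < 2 * n then (2 : ℂ) else (-2 : ℂ)) • 1) else 0)
    (γup : Fin (2 * n) → Module.End ℂ S)
    (hγup : ∀ μ : Fin (2 * n), γup μ = if (μ : ℕ) + 1 < 2 * n then γ μ else -γ μ)
    (γ₅ : Module.End ℂ S) (hγ₅ : γ₅ = (List.ofFn γ).prod)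
    (B : S →ₗ[ℂ] Module.Dual ℂ S)
    (hBint : ∀ (μ : Fin (2 * n)) (s t : S), B (γ μ s) t = B s (γ μ t))
    (σ : S ≃ₛₗ[starRingEnd ℂ] S)
    (hσint : ∀ (μ : Fin (2 * n)) (s : S), σ (γ μ s) = γ μ (σ s))
    (m e : ℝ) (A : Fin (2 * n) → (Fin (2 * n) → ℝ) → ℝ)
    (ψ : (Fin (2 * n) → ℝ) → S) (hψ : Differentiable ℝ ψ)
    (hDirac : ∀ x : Fin (2 * n) → ℝ,
      ∑ μ : Fin (2 * n), γup μ (fderiv ℝ ψ x (Pi.single μ 1)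
        - (Complex.I * (e : ℂ) * (A μ x : ℂ)) • ψ x) = (m : ℂ) • ψ x)
    (j : Fin (2 * n) → (Fin (2 * n) → ℝ) → ℂ)
    (hj : ∀ (μ : Fin (2 * n)) (x : Fin (2 * n) → ℝ),
      j μ x = Complex.I ^ (n + 1) * B (γ₅ (σ.symm (ψ x))) (γup μ (ψ x))) :
    ∀ x : Fin (2 * n) → ℝ,
      ∑ μ : Fin (2 * n), fderiv ℝ (j μ) x (Pi.single μ 1) = 0 := by
  intro x
  have hanti : ∀ μ ν, ν ≠ μ → γ μ * γ ν = -(γ ν * γ μ) := fun μ ν hν =>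
    eq_neg_of_add_eq_zero_left (by simpa [hν.symm] using hCl μ ν)
  have hγ₅γ : ∀ μ, γ₅ * γ μ = -(γ μ * γ₅) := fun μ =>
    hγ₅ ▸ prod_ofFn_mul_of_anticommute (even_two_mul n) γ μ (hanti μ)
  let Φ : S →ₗ⋆[ℂ] S →ₗ[ℂ] ℂ := B ∘ₛₗ γ₅ ∘ₛₗ σ.symm.toLinearMap
  have hskew : ∀ μ u v, Φ (γup μ u) v = -Φ u (γup μ v) := by
    intro μ u v
    have hγ : ∀ u v, Φ (γ μ u) v = -Φ u (γ μ v) :=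
      skew_of_symmetric_of_anticommute B γ₅ (γ μ) σ (hBint μ) (hσint μ) (hγ₅γ μ)
    rw [hγup]
    split_ifs
    · exact hγ u v
    · simp only [LinearMap.neg_apply, map_neg, hγ, neg_neg]
  have hderiv : ∀ μ, fderiv ℝ (j μ) x (Pi.single μ 1) = Complex.I ^ (n + 1) *
      (Φ (fderiv ℝ ψ x (Pi.single μ 1)) (γup μ (ψ x)) +
        Φ (ψ x) (γup μ (fderiv ℝ ψ x (Pi.single μ 1)))) := by
    intro μ
    have hjΦ : j μ = fun y => (Complex.I ^ (n + 1) • Φ.compl₂ (γup μ)) (ψ y) (ψ y) := by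
      funext y; exact hj μ y
    rw [hjΦ, LinearMap.fderiv_sesq_apply _ (hψ x) (hψ x)]
    simp [mul_add]
  have hD : ∑ μ, γup μ (fderiv ℝ ψ x (Pi.single μ 1)) =
      (m : ℂ) • ψ x + ∑ μ, (Complex.I * e * A μ x) • γup μ (ψ x) := by
    rw [← sub_eq_iff_eq_add', ← hDirac x]
    simp [sum_sub_distrib]
  have himag : ∀ μ, conj (Complex.I * e * A μ x) = -(Complex.I * e * A μ x) := fun μ => by
    simp
  rw [sum_congr rfl fun μ _ => hderiv μ, ← mul_sum,
    Φ.sum_divergence_eq_zero_of_skew γup hskew (Complex.conj_ofReal m) himag _ _ hD, mul_zero]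

/-- Proposition 2(ii), current conservation.  In the normalized
Lorentzian Dirac setting of signature `(2n−1,1)`, if the differentiable wave function
`ψ : ℝ^{2n} → S` satisfies the Dirac equation
`Σ_μ γ^μ (∂_μ ψ − i e A_μ ψ) = m ψ`, then the current
`j^μ(ψ) = i^{n+1} ⟨B (γ_{2n+1} ψ_c), γ^μ ψ⟩` is conserved: `Σ_μ ∂_μ j^μ(ψ) = 0`. -/
theorem current_conservation
    (n : ℕ) (S : Type*) [NormedAddCommGroup S] [NormedSpace ℂ S]
    [FiniteDimensional ℂ S] (hdim : Module.finrank ℂ S = 2 ^ n)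
    (γ : Fin (2 * n) → Module.End ℂ S)
    (hCl : ∀ i j : Fin (2 * n), γ i * γ j + γ j * γ i =
      if i = j then ((if (i : ℕ) + 1 < 2 * n then (2 : ℂ) else (-2 : ℂ)) • 1) else 0)
    (γup : Fin (2 * n) → Module.End ℂ S)
    (hγup : ∀ μ : Fin (2 * n), γup μ = if (μ : ℕ) + 1 < 2 * n then γ μ else -γ μ)
    (γ₅ : Module.End ℂ S) (hγ₅ : γ₅ = (List.ofFn γ).prod)
    (B : S →ₗ[ℂ] Module.Dual ℂ S) (hBbij : Function.Bijective B)
    (hBint : ∀ (μ : Fin (2 * n)) (s t : S), B (γ μ s) t = B s (γ μ t))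
    (hBsymm : ∀ s t : S, B s t = (-1 : ℂ) ^ (n * (n - 1) / 2) * B t s)
    (σ : S ≃ₛₗ[starRingEnd ℂ] S)
    (hσint : ∀ (μ : Fin (2 * n)) (s : S), σ (γ μ s) = γ μ (σ s))
    (hσσ : ∀ s : S, σ (σ s) = ((-1 : ℂ) ^ ((n - 1) * (n - 2) / 2)) • s)
    (hherm : ∀ s t : S, starRingEnd ℂ (B (σ s) t) = B (σ t) s)
    (m e : ℝ) (A : Fin (2 * n) → (Fin (2 * n) → ℝ) → ℝ)
    (ψ : (Fin (2 * n) → ℝ) → S) (hψ : Differentiable ℝ ψ)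
    (hDirac : ∀ x : Fin (2 * n) → ℝ,
      ∑ μ : Fin (2 * n), γup μ (fderiv ℝ ψ x (Pi.single μ 1)
        - (Complex.I * (e : ℂ) * (A μ x : ℂ)) • ψ x) = (m : ℂ) • ψ x)
    (j : Fin (2 * n) → (Fin (2 * n) → ℝ) → ℂ)
    (hj : ∀ (μ : Fin (2 * n)) (x : Fin (2 * n) → ℝ),
      j μ x = Complex.I ^ (n + 1) * B (γ₅ (σ.symm (ψ x))) (γup μ (ψ x))) :
    ∀ x : Fin (2 * n) → ℝ,
      ∑ μ : Fin (2 * n), fderiv ℝ (j μ) x (Pi.single μ 1) = 0 :=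
  current_conservation_general n S γ hCl γup hγup γ₅ hγ₅ B hBint σ hσint m e A ψ hψ hDirac j hj
end
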